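/- arXiv:1803.05408 — 9 statements merged into one kernel-verified Lean document; each statement's English description precedes it below -/
import Mathlib

section
/- Let N ≥ 1 and let ξ₀, ξ₁, …, ξ_N be real numbers with ξᵢ ≠ 0 for all 0 ≤ i ≤ N−1. Then ∑_{i=0}^{N−1} 1_{ξᵢ < 0}·(ξ_{i+1} − ξᵢ) = −(ξ_N)₋ + (ξ₀)₋ + ∑_{i=0}^{N−1} 1_{ξᵢ·ξ_{i+1} < 0}·|ξ_{i+1}|, where x₋ = max(−x, 0). -/
/-- Discrete integration-by-parts identity for the negative part:
`∑_{i<N} 1_{ξᵢ<0}(ξ_{i+1}−ξᵢ) = −(ξ_N)₋ + (ξ₀)₋ + ∑_{i<N} 1_{ξᵢξ_{i+1}<0}|ξ_{i+1}|`. -/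
theorem discrete_neg_part_identity (N : ℕ) (hN : 1 ≤ N) (ξ : ℕ → ℝ)
    (hξ : ∀ i < N, ξ i ≠ 0) :
    ∑ i ∈ Finset.range N, (if ξ i < 0 then ξ (i+1) - ξ i else 0)
      = -max (-ξ N) 0 + max (-ξ 0) 0
        + ∑ i ∈ Finset.range N, (if ξ i * ξ (i+1) < 0 then |ξ (i+1)| else 0) := by
  have key : ∀ i ∈ Finset.range N,
      (if ξ i < 0 then ξ (i+1) - ξ i else 0)
        = (max (-ξ i) 0 - max (-ξ (i+1)) 0)
          + (if ξ i * ξ (i+1) < 0 then |ξ (i+1)| else 0) := by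
    intro i hi
    rw [Finset.mem_range] at hi
    rcases (hξ i hi).lt_or_gt with h | h
    · rcases lt_trichotomy (ξ (i+1)) 0 with h' | h' | h'
      · have : 0 < ξ i * ξ (i+1) := mul_pos_of_neg_of_neg h h'
        rw [if_pos h, if_neg (by linarith), max_eq_left (by linarith),
          max_eq_left (by linarith)]
        ring
      · rw [if_pos h, max_eq_left (by linarith), h', if_neg (by simp [h'])]
        simp [h']
      · have : ξ i * ξ (i+1) < 0 := mul_neg_of_neg_of_pos h h'
        rw [if_pos h, if_pos this, max_eq_left (by linarith),
          max_eq_right (by linarith), abs_of_pos h']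
        ring
    · rcases lt_or_ge (ξ (i+1)) 0 with h' | h'
      · have : ξ i * ξ (i+1) < 0 := mul_neg_of_pos_of_neg h h'
        rw [if_neg (by linarith), if_pos this, max_eq_right (by linarith),
          max_eq_left (by linarith), abs_of_neg h']
        ring
      · rw [if_neg (by linarith), if_neg (by nlinarith), max_eq_right (by linarith),
          max_eq_right (by linarith)]
        ring
  rw [Finset.sum_congr rfl key, Finset.sum_add_distrib,
    Finset.sum_range_sub' (fun i => max (-ξ i) 0)]
  ring
end

section
/- Let T > 0, N ≥ 1 and let ξ₀, …, ξ_N be real numbers with ξᵢ ≠ 0 for all 0 ≤ i ≤ N−1. Define Q⁺ = (T/N)·∑_{i<N} 1_{ξᵢ>0}, Q⁻ = (T/N)·∑_{i<N} 1_{ξᵢ<0}, R⁺ = ∑_{i<N} 1_{ξᵢ>0}(ξ_{i+1}−ξᵢ), R⁻ = ∑_{i<N} 1_{ξᵢ<0}(ξ_{i+1}−ξᵢ), and the discrete local time L = 2∑_{i<N} 1_{ξᵢξ_{i+1}<0}|ξ_{i+1}|. Assume Q⁺ > 0 and Q⁻ > 0. Then the discretized quasi-likelihood Λ(b₊, b₋)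 = ∑_{i<N} b(ξᵢ)(ξ_{i+1}−ξᵢ) − (T/(2N))∑_{i<N} b(ξᵢ)², where b(x) = b₊ if x > 0 and b(x) = b₋ if x < 0, attains its unique global maximum at (β⁺, β⁻) = (R⁺/Q⁺, R⁻/Q⁻), and moreover β⁺ = ((ξ_N)₊ − (ξ₀)₊ − L/2)/Q⁺ and β⁻ = −((ξ_N)₋ − (ξ₀)₋ − L/2)/Q⁻. -/
private lemma stepP (a b : ℝ) (ha : a ≠ 0) :
    max b 0 - max a 0 = (if 0 < a then b - a else 0) + (if a * b < 0 then |b| else 0) := by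
  rcases ha.lt_or_gt with h | h
  · rcases le_or_gt b 0 with hb | hb
    · have hnb : ¬ a * b < 0 := not_lt.2 (by nlinarith)
      simp [asymm h, hnb, max_eq_right hb, max_eq_right h.le]
    · have hmb : a * b < 0 := mul_neg_of_neg_of_pos h hb
      simp [asymm h, hmb, abs_of_pos hb, max_eq_left hb.le, max_eq_right h.le]
  · rcases le_or_gt 0 b with hb | hb
    · have hnb : ¬ a * b < 0 := not_lt.2 (mul_nonneg h.le hb)
      simp [h, hnb, max_eq_left hb, max_eq_left h.le]
    · have hmb : a * b < 0 := mul_neg_of_pos_of_neg h hb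
      simp [h, hmb, abs_of_neg hb, max_eq_right hb.le, max_eq_left h.le]
      ring

private lemma stepM (a b : ℝ) (ha : a ≠ 0) :
    max (-b) 0 - max (-a) 0 = -(if a < 0 then b - a else 0) + (if a * b < 0 then |b| else 0) := by
  rcases ha.lt_or_gt with h | h
  · rcases le_or_gt b 0 with hb | hb
    · have hnb : ¬ a * b < 0 := not_lt.2 (by nlinarith)
      simp [h, hnb, max_eq_left (neg_nonneg.2 hb), max_eq_left (neg_nonneg.2 h.le)]
      ring
    · have hmb : a * b < 0 := mul_neg_of_neg_of_pos h hb
      simp [h, hmb, abs_of_pos hb, max_eq_right (neg_nonpos.2 hb.le), max_eq_left (neg_nonneg.2 h.le)]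
  · rcases le_or_gt 0 b with hb | hb
    · have hnb : ¬ a * b < 0 := not_lt.2 (mul_nonneg h.le hb)
      simp [asymm h, hnb, max_eq_right (neg_nonpos.2 hb), max_eq_right (neg_nonpos.2 h.le)]
    · have hmb : a * b < 0 := mul_neg_of_pos_of_neg h hb
      simp [asymm h, hmb, abs_of_neg hb, max_eq_left (neg_nonneg.2 hb.le),
        max_eq_right (neg_nonpos.2 h.le)]

/-- The discretized quasi-likelihood is uniquely maximized at `(R⁺/Q⁺, R⁻/Q⁻)`,
and the maximizers admit the closed form in terms of the discrete local time. -/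
theorem discrete_qmle (T : ℝ) (hT : 0 < T) (N : ℕ) (hN : 1 ≤ N) (ξ : ℕ → ℝ)
    (hξ : ∀ i < N, ξ i ≠ 0)
    (Qp Qm Rp Rm L : ℝ)
    (hQpdef : Qp = (T / N) * ∑ i ∈ Finset.range N, (if 0 < ξ i then (1:ℝ) else 0))
    (hQmdef : Qm = (T / N) * ∑ i ∈ Finset.range N, (if ξ i < 0 then (1:ℝ) else 0))
    (hRpdef : Rp = ∑ i ∈ Finset.range N, (if 0 < ξ i then ξ (i+1) - ξ i else 0))
    (hRmdef : Rm = ∑ i ∈ Finset.range N, (if ξ i < 0 then ξ (i+1) - ξ i else 0))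
    (hLdef : L = 2 * ∑ i ∈ Finset.range N, (if ξ i * ξ (i+1) < 0 then |ξ (i+1)| else 0))
    (hQp : 0 < Qp) (hQm : 0 < Qm)
    (Λ : ℝ → ℝ → ℝ)
    (hΛ : ∀ bp bm, Λ bp bm =
      (∑ i ∈ Finset.range N, (if 0 < ξ i then bp else bm) * (ξ (i+1) - ξ i))
        - (T / (2 * N)) * ∑ i ∈ Finset.range N, (if 0 < ξ i then bp else bm)^2) :
    (∀ bp bm, Λ bp bm ≤ Λ (Rp / Qp) (Rm / Qm)) ∧
    (∀ bp bm, Λ bp bm = Λ (Rp / Qp) (Rm / Qm) ↔ bp = Rp / Qp ∧ bm = Rm / Qm) ∧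
    Rp / Qp = (max (ξ N) 0 - max (ξ 0) 0 - L / 2) / Qp ∧
    Rm / Qm = -((max (-ξ N) 0 - max (-ξ 0) 0 - L / 2) / Qm) := by
  have hNne : (N:ℝ) ≠ 0 := Nat.cast_ne_zero.2 (by omega)
  -- closed quadratic form of Λ
  have hΛ' : ∀ bp bm, Λ bp bm = bp * Rp + bm * Rm - (Qp * bp^2 + Qm * bm^2) / 2 := by
    intro bp bm
    have h1 : ∑ i ∈ Finset.range N, (if 0 < ξ i then bp else bm) * (ξ (i+1) - ξ i)
        = bp * ∑ i ∈ Finset.range N, (if 0 < ξ i then ξ (i+1) - ξ i else 0)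
          + bm * ∑ i ∈ Finset.range N, (if ξ i < 0 then ξ (i+1) - ξ i else 0) := by
      rw [Finset.mul_sum, Finset.mul_sum, ← Finset.sum_add_distrib]
      refine Finset.sum_congr rfl fun i hi => ?_
      rcases (hξ i (Finset.mem_range.1 hi)).lt_or_gt with h | h
      · simp [h, asymm h]
      · simp [h, asymm h]
    have h2 : ∑ i ∈ Finset.range N, (if 0 < ξ i then bp else bm)^2
        = bp^2 * ∑ i ∈ Finset.range N, (if 0 < ξ i then (1:ℝ) else 0)
          + bm^2 * ∑ i ∈ Finset.range N, (if ξ i < 0 then (1:ℝ) else 0) := by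
      rw [Finset.mul_sum, Finset.mul_sum, ← Finset.sum_add_distrib]
      refine Finset.sum_congr rfl fun i hi => ?_
      rcases (hξ i (Finset.mem_range.1 hi)).lt_or_gt with h | h
      · simp [h, asymm h]
      · simp [h, asymm h]
    rw [hΛ, h1, h2, hRpdef, hRmdef, hQpdef, hQmdef]
    field_simp
  have hQpne : Qp ≠ 0 := hQp.ne'
  have hQmne : Qm ≠ 0 := hQm.ne'
  have key : ∀ bp bm, Λ (Rp / Qp) (Rm / Qm) - Λ bp bm
      = Qp / 2 * (bp - Rp / Qp)^2 + Qm / 2 * (bm - Rm / Qm)^2 := by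
    intro bp bm
    rw [hΛ', hΛ']
    field_simp
    ring
  refine ⟨fun bp bm => ?_, fun bp bm => ?_, ?_, ?_⟩
  · nlinarith [key bp bm, sq_nonneg (bp - Rp / Qp), sq_nonneg (bm - Rm / Qm)]
  · constructor
    · intro heq
      have hk := key bp bm
      rw [heq, sub_self] at hk
      have h1 : (bp - Rp / Qp)^2 = 0 := by
        nlinarith [sq_nonneg (bp - Rp / Qp), sq_nonneg (bm - Rm / Qm)]
      have h2 : (bm - Rm / Qm)^2 = 0 := by
        nlinarith [sq_nonneg (bp - Rp / Qp), sq_nonneg (bm - Rm / Qm)]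
      constructor
      · have := pow_eq_zero_iff (n := 2) (by norm_num) |>.1 h1
        linarith [sub_eq_zero.1 this]
      · have := pow_eq_zero_iff (n := 2) (by norm_num) |>.1 h2
        linarith [sub_eq_zero.1 this]
    · rintro ⟨rfl, rfl⟩; rfl
  · -- telescoping for Rp
    have htel : max (ξ N) 0 - max (ξ 0) 0
        = Rp + ∑ i ∈ Finset.range N, (if ξ i * ξ (i+1) < 0 then |ξ (i+1)| else 0) := by
      rw [hRpdef, ← Finset.sum_add_distrib,
        ← Finset.sum_range_sub (fun i => max (ξ i) 0) N]
      refine Finset.sum_congr rfl fun i hi => ?_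
      exact stepP (ξ i) (ξ (i+1)) (hξ i (Finset.mem_range.1 hi))
    have : Rp = max (ξ N) 0 - max (ξ 0) 0 - L / 2 := by
      rw [hLdef]; rw [htel]; ring
    rw [this]
  · have htel : max (-ξ N) 0 - max (-ξ 0) 0
        = -Rm + ∑ i ∈ Finset.range N, (if ξ i * ξ (i+1) < 0 then |ξ (i+1)| else 0) := by
      rw [hRmdef, ← Finset.sum_neg_distrib, ← Finset.sum_add_distrib,
        ← Finset.sum_range_sub (fun i => max (-ξ i) 0) N]
      refine Finset.sum_congr rfl fun i hi => ?_
      exact stepM (ξ i) (ξ (i+1)) (hξ i (Finset.mem_range.1 hi))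
    have : Rm = -(max (-ξ N) 0 - max (-ξ 0) 0 - L / 2) := by
      rw [hLdef]; rw [htel]; ring
    rw [this, neg_div]
end

section
/- Let σ₊, σ₋ > 0, b₊, b₋ ∈ ℝ and λ > 0. Set s₊ = √(b₊² + 2λσ₊²), s₋ = √(b₋² + 2λσ₋²), μ₋ = (−b₋ + s₋)/σ₋², μ₊ = (−b₊ + s₊)/σ₊², ν₊ = (−b₊ − s₊)/σ₊², κ₊ = (−b₋σ₊² + b₊σ₋² + σ₋²s₊ + σ₊²s₋)/(2σ₋²s₊) and δ₊ = (b₋σ₊² − b₊σ₋² + σ₋²s₊ − σ₊²s₋)/(2σ₋²s₊). Define ψ : ℝ → ℝ by ψ(x) = exp(μ₋x) for x < 0 and ψ(x) = κ₊·exp(μ₊x) + δ₊·exp(ν₊x) for x ≥ 0. Then: (i) κ₊ + δ₊ = 1, so ψ is continuous with ψ(0) = 1; (ii) ψ is differentiable on all of ℝ with ψ′(0) = μ₋; (iii) on (0, ∞) one has (σ₊²/2)ψ″(x) + b₊ψ′(x) = λψ(x), and on (−∞, 0) one has (σ₋²/2)ψ″(x) + b₋ψ′(x) = λψ(x); (iv)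 ψ is positive and strictly increasing on ℝ; (v) ψ(x) → 0 as x → −∞ and ψ(x) → +∞ as x → +∞. -/
open Filter

private lemma cexp_hasDerivAt (c r x : ℝ) :
    HasDerivAt (fun y => c * Real.exp (r * y)) (c * r * Real.exp (r * x)) x := by
  have h1 : HasDerivAt (fun y : ℝ => r * y) r x := by simpa using (hasDerivAt_id x).const_mul r
  simpa [mul_comm, mul_assoc, mul_left_comm] using (h1.exp.const_mul c)

set_option maxHeartbeats 1000000 in
/-- Properties of the increasing fundamental solution `ψ_λ` of `ℒf = λf` for the
drifted Oscillating Brownian motion. -/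
theorem increasing_fundamental_solution
    (σp σm bp bm lam : ℝ) (hσp : 0 < σp) (hσm : 0 < σm) (hlam : 0 < lam)
    (sp sm μm μp νp κp δp : ℝ)
    (hsp : sp = Real.sqrt (bp^2 + 2 * lam * σp^2))
    (hsm : sm = Real.sqrt (bm^2 + 2 * lam * σm^2))
    (hμm : μm = (-bm + sm) / σm^2)
    (hμp : μp = (-bp + sp) / σp^2)
    (hνp : νp = (-bp - sp) / σp^2)
    (hκp : κp = (-bm * σp^2 + bp * σm^2 + σm^2 * sp + σp^2 * sm) / (2 * σm^2 * sp))
    (hδp : δp = (bm * σp^2 - bp * σm^2 + σm^2 * sp - σp^2 * sm) / (2 * σm^2 * sp))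
    (ψ : ℝ → ℝ)
    (hψ : ∀ x, ψ x = if x < 0 then Real.exp (μm * x)
      else κp * Real.exp (μp * x) + δp * Real.exp (νp * x)) :
    (κp + δp = 1 ∧ Continuous ψ ∧ ψ 0 = 1) ∧
    (Differentiable ℝ ψ ∧ deriv ψ 0 = μm) ∧
    (∀ x, 0 < x → (σp^2 / 2) * deriv (deriv ψ) x + bp * deriv ψ x = lam * ψ x) ∧
    (∀ x, x < 0 → (σm^2 / 2) * deriv (deriv ψ) x + bm * deriv ψ x = lam * ψ x) ∧
    ((∀ x, 0 < ψ x) ∧ StrictMono ψ) ∧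
    (Tendsto ψ atBot (nhds 0) ∧ Tendsto ψ atTop atTop) := by
  have hσp2 : (0:ℝ) < σp^2 := by positivity
  have hσm2 : (0:ℝ) < σm^2 := by positivity
  have hσpne : σp^2 ≠ 0 := ne_of_gt hσp2
  have hσmne : σm^2 ≠ 0 := ne_of_gt hσm2
  -- basic facts about sp, sm
  have hsp_pos : 0 < sp := by rw [hsp]; exact Real.sqrt_pos.mpr (by positivity)
  have hsm_pos : 0 < sm := by rw [hsm]; exact Real.sqrt_pos.mpr (by positivity)
  have hspne : sp ≠ 0 := ne_of_gt hsp_pos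
  have hsp2 : sp^2 = bp^2 + 2 * lam * σp^2 := by
    rw [hsp]; exact Real.sq_sqrt (by positivity)
  have hsm2 : sm^2 = bm^2 + 2 * lam * σm^2 := by
    rw [hsm]; exact Real.sq_sqrt (by positivity)
  have hbp_lt : bp < sp := by nlinarith
  have hbp_gt : -sp < bp := by nlinarith
  have hbm_lt : bm < sm := by nlinarith
  have hbm_gt : -sm < bm := by nlinarith
  -- signs of exponents and coefficients
  have hμm_pos : 0 < μm := by rw [hμm]; exact div_pos (by linarith) hσm2
  have hμp_pos : 0 < μp := by rw [hμp]; exact div_pos (by linarith) hσp2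
  have hνp_neg : νp < 0 := by rw [hνp]; exact div_neg_of_neg_of_pos (by linarith) hσp2
  have hκ_pos : 0 < κp := by
    rw [hκp]
    apply div_pos _ (by positivity)
    nlinarith [mul_pos hσm2 (show (0:ℝ) < bp + sp by linarith),
      mul_pos hσp2 (show (0:ℝ) < sm - bm by linarith)]
  -- the two key algebraic identities
  have hsum : κp + δp = 1 := by
    rw [hκp, hδp]; field_simp; ring
  have hslope : κp * μp + δp * νp = μm := by
    rw [hκp, hδp, hμp, hνp, hμm]; field_simp; ring
  -- quadratic identities
  have hquadp : σp^2 / 2 * μp^2 + bp * μp = lam := by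
    rw [hμp]; field_simp; nlinarith [hsp2]
  have hquadn : σp^2 / 2 * νp^2 + bp * νp = lam := by
    rw [hνp]; field_simp; nlinarith [hsp2]
  have hquadm : σm^2 / 2 * μm^2 + bm * μm = lam := by
    rw [hμm]; field_simp; nlinarith [hsm2]
  -- the two local models
  set g : ℝ → ℝ := fun y => Real.exp (μm * y) with hg_def
  set h : ℝ → ℝ := fun y => κp * Real.exp (μp * y) + δp * Real.exp (νp * y) with hh_def
  have hg : ∀ x, HasDerivAt g (μm * Real.exp (μm * x)) x := by
    intro x
    simpa using cexp_hasDerivAt 1 μm x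
  have hh : ∀ x, HasDerivAt h (κp * μp * Real.exp (μp * x) + δp * νp * Real.exp (νp * x)) x :=
    fun x => (cexp_hasDerivAt κp μp x).add (cexp_hasDerivAt δp νp x)
  have hψ0 : ψ 0 = 1 := by
    rw [hψ 0]; simp [hsum]
  -- eventual equalities
  have hev_neg : ∀ x < 0, ψ =ᶠ[nhds x] g := by
    intro x hx
    filter_upwards [Iio_mem_nhds hx] with y hy
    rw [hψ y, if_pos (Set.mem_Iio.mp hy)]
  have hev_pos : ∀ x, 0 < x → ψ =ᶠ[nhds x] h := by
    intro x hx
    filter_upwards [Ioi_mem_nhds hx] with y hy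
    rw [hψ y, if_neg (not_lt.mpr (le_of_lt (Set.mem_Ioi.mp hy)))]
  -- derivatives away from 0
  have hder_neg : ∀ x < 0, HasDerivAt ψ (μm * Real.exp (μm * x)) x := by
    intro x hx
    exact (hg x).congr_of_eventuallyEq (hev_neg x hx)
  have hder_pos : ∀ x, 0 < x →
      HasDerivAt ψ (κp * μp * Real.exp (μp * x) + δp * νp * Real.exp (νp * x)) x := by
    intro x hx
    exact (hh x).congr_of_eventuallyEq (hev_pos x hx)
  -- derivative at 0
  have hψ_eq_h : ∀ y, 0 ≤ y → ψ y = h y := by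
    intro y hy
    rw [hψ y, if_neg (not_lt.mpr hy)]
  have hder0 : HasDerivAt ψ μm 0 := by
    have hIic : HasDerivWithinAt ψ μm (Set.Iic 0) 0 := by
      have hgw : HasDerivWithinAt g μm (Set.Iic 0) 0 := by
        simpa using (hg 0).hasDerivWithinAt
      refine hgw.congr ?_ ?_
      · intro y hy
        rcases lt_or_eq_of_le (Set.mem_Iic.mp hy) with h' | h'
        · rw [hψ y, if_pos h']
        · subst h'; simp [hψ0, hg_def]
      · simp [hψ0, hg_def]
    have hIci : HasDerivWithinAt ψ μm (Set.Ici 0) 0 := by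
      have hhw : HasDerivWithinAt h μm (Set.Ici 0) 0 := by
        have := (hh 0).hasDerivWithinAt (s := Set.Ici 0)
        simpa [hslope] using this
      refine hhw.congr (fun y hy => hψ_eq_h y hy) (hψ_eq_h 0 le_rfl)
    have := hIic.union hIci
    rw [Set.Iic_union_Ici] at this
    exact this.hasDerivAt (by simp)
  -- global differentiability
  have hdiff : Differentiable ℝ ψ := by
    intro x
    rcases lt_trichotomy x 0 with hx | hx | hx
    · exact (hder_neg x hx).differentiableAt
    · subst hx; exact hder0.differentiableAt
    · exact (hder_pos x hx).differentiableAt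
  have hderiv_neg : ∀ x < 0, deriv ψ x = μm * Real.exp (μm * x) := fun x hx =>
    (hder_neg x hx).deriv
  have hderiv_pos : ∀ x, 0 < x →
      deriv ψ x = κp * μp * Real.exp (μp * x) + δp * νp * Real.exp (νp * x) := fun x hx =>
    (hder_pos x hx).deriv
  -- second derivatives
  have hderiv2_pos : ∀ x, 0 < x → deriv (deriv ψ) x =
      κp * μp * μp * Real.exp (μp * x) + δp * νp * νp * Real.exp (νp * x) := by
    intro x hx
    have hev : deriv ψ =ᶠ[nhds x]
        (fun y => κp * μp * Real.exp (μp * y) + δp * νp * Real.exp (νp * y)) := by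
      filter_upwards [Ioi_mem_nhds hx] with y hy
      exact hderiv_pos y (Set.mem_Ioi.mp hy)
    rw [hev.deriv_eq]
    exact ((cexp_hasDerivAt (κp * μp) μp x).add (cexp_hasDerivAt (δp * νp) νp x)).deriv
  have hderiv2_neg : ∀ x < 0, deriv (deriv ψ) x = μm * μm * Real.exp (μm * x) := by
    intro x hx
    have hev : deriv ψ =ᶠ[nhds x] (fun y => μm * Real.exp (μm * y)) := by
      filter_upwards [Iio_mem_nhds hx] with y hy
      exact hderiv_neg y (Set.mem_Iio.mp hy)
    rw [hev.deriv_eq]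
    exact (cexp_hasDerivAt μm μm x).deriv
  -- positivity of ψ
  have hψ_pos : ∀ x, 0 < ψ x := by
    intro x
    rcases lt_or_ge x 0 with hx | hx
    · rw [hψ x, if_pos hx]; positivity
    · rw [hψ_eq_h x hx]
      have hE1 : 0 < Real.exp (μp * x) := Real.exp_pos _
      have hE2 : 0 < Real.exp (νp * x) := Real.exp_pos _
      have hle : Real.exp (νp * x) ≤ Real.exp (μp * x) := by
        apply Real.exp_le_exp.mpr
        exact mul_le_mul_of_nonneg_right (le_of_lt (hνp_neg.trans hμp_pos)) hx
      rcases le_or_gt 0 δp with hδ | hδ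
      · have h1 := mul_pos hκ_pos hE1
        have h2 := mul_nonneg hδ hE2.le
        simp only [hh_def]; linarith
      · simp only [hh_def]
        have h1 : δp * Real.exp (μp * x) ≤ δp * Real.exp (νp * x) :=
          mul_le_mul_of_nonpos_left hle hδ.le
        have h2 : κp * Real.exp (μp * x) + δp * Real.exp (μp * x) = Real.exp (μp * x) := by
          rw [← add_mul, hsum, one_mul]
        linarith
  -- positivity of deriv ψ
  have hderiv_pos_all : ∀ x, 0 < deriv ψ x := by
    intro x
    rcases lt_trichotomy x 0 with hx | hx | hx
    · rw [hderiv_neg x hx]; positivity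
    · subst hx; rw [hder0.deriv]; exact hμm_pos
    · rw [hderiv_pos x hx]
      have hE1 : 1 ≤ Real.exp (μp * x) := Real.one_le_exp (by positivity)
      have hE2p : 0 < Real.exp (νp * x) := Real.exp_pos _
      have hνx : νp * x ≤ 0 := mul_nonpos_iff.mpr (Or.inr ⟨hνp_neg.le, hx.le⟩)
      have hE2 : Real.exp (νp * x) ≤ 1 := Real.exp_le_one_iff.mpr hνx
      have hκμ : 0 < κp * μp := mul_pos hκ_pos hμp_pos
      have hge : κp * μp ≤ κp * μp * Real.exp (μp * x) := le_mul_of_one_le_right hκμ.le hE1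
      rcases le_or_gt 0 (δp * νp) with hδν | hδν
      · have h2 := mul_nonneg hδν hE2p.le
        linarith
      · have h2 : δp * νp * 1 ≤ δp * νp * Real.exp (νp * x) :=
          mul_le_mul_of_nonpos_left hE2 hδν.le
        rw [mul_one] at h2
        linarith [hslope, hμm_pos]
  constructor
  · exact ⟨hsum, hdiff.continuous, hψ0⟩
  constructor
  · exact ⟨hdiff, hder0.deriv⟩
  constructor
  · intro x hx
    rw [hderiv2_pos x hx, hderiv_pos x hx, hψ_eq_h x hx.le]
    simp only [hh_def]
    linear_combination (κp * Real.exp (μp * x)) * hquadp + (δp * Real.exp (νp * x)) * hquadn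
  constructor
  · intro x hx
    rw [hderiv2_neg x hx, hderiv_neg x hx, hψ x, if_pos hx]
    linear_combination (Real.exp (μm * x)) * hquadm
  constructor
  · exact ⟨hψ_pos, strictMono_of_deriv_pos hderiv_pos_all⟩
  constructor
  · -- tendsto at bot
    have hgb : Tendsto g atBot (nhds 0) := by
      apply Real.tendsto_exp_atBot.comp
      exact (tendsto_id.const_mul_atBot hμm_pos)
    apply hgb.congr'
    filter_upwards [eventually_lt_atBot (0:ℝ)] with y hy
    rw [hψ y, if_pos hy]
  · -- tendsto at top
    have hbound : ∀ᶠ x in atTop, κp * Real.exp (μp * x) + min δp 0 ≤ ψ x := by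
      filter_upwards [eventually_ge_atTop (0:ℝ)] with y hy
      rw [hψ_eq_h y hy]
      have hE2p : 0 < Real.exp (νp * y) := Real.exp_pos _
      have hνy : νp * y ≤ 0 := mul_nonpos_iff.mpr (Or.inr ⟨hνp_neg.le, hy⟩)
      have hE2 : Real.exp (νp * y) ≤ 1 := Real.exp_le_one_iff.mpr hνy
      simp only [hh_def]
      rcases le_or_gt 0 δp with hδ | hδ
      · rw [min_eq_right hδ]
        have h2 := mul_nonneg hδ hE2p.le
        linarith
      · rw [min_eq_left hδ.le]
        have h2 : δp * 1 ≤ δp * Real.exp (νp * y) := mul_le_mul_of_nonpos_left hE2 hδ.le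
        rw [mul_one] at h2
        linarith
    apply tendsto_atTop_mono' _ hbound
    apply tendsto_atTop_add_const_right
    apply Tendsto.const_mul_atTop hκ_pos
    exact Real.tendsto_exp_atTop.comp (tendsto_id.const_mul_atTop hμp_pos)
end

section
/- Let σ₊, σ₋ > 0, b₊, b₋ ∈ ℝ and λ > 0. Set s₊ = √(b₊² + 2λσ₊²), s₋ = √(b₋² + 2λσ₋²), μ₋ = (−b₋ + s₋)/σ₋², ν₋ = (−b₋ − s₋)/σ₋², ν₊ = (−b₊ − s₊)/σ₊², κ₋ = (b₊σ₋² − b₋σ₊² + σ₋²s₊ + σ₊²s₋)/(2σ₊²s₋) and δ₋ = (b₋σ₊² − b₊σ₋² − σ₋²s₊ + σ₊²s₋)/(2σ₊²s₋). Define φ : ℝ → ℝ by φ(x) = exp(ν₊x) for x ≥ 0 and φ(x) = κ₋·exp(ν₋x) + δ₋·exp(μ₋x) for x < 0. Then: (i) κ₋ + δ₋ = 1, so φ is continuous with φ(0) = 1; (ii) φ is differentiable on all of ℝ with φ′(0) = ν₊; (iii) on (0, ∞) one has (σ₊²/2)φ″(x) + b₊φ′(x) = λφ(x), and on (−∞,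 0) one has (σ₋²/2)φ″(x) + b₋φ′(x) = λφ(x); (iv) φ is positive and strictly decreasing on ℝ; (v) φ(x) → +∞ as x → −∞ and φ(x) → 0 as x → +∞. -/
open Filter

set_option maxHeartbeats 1000000

private lemma root_eq_aux (σ b lam s r : ℝ) (hσ : σ ≠ 0)
    (hs2 : s ^ 2 = b ^ 2 + 2 * lam * σ ^ 2)
    (hr : r = (-b - s) / σ ^ 2 ∨ r = (-b + s) / σ ^ 2) :
    σ ^ 2 / 2 * r ^ 2 + b * r = lam := by
  have hσ2 : σ ^ 2 ≠ 0 := pow_ne_zero 2 hσ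
  rcases hr with hr | hr <;> subst hr <;> field_simp <;> linear_combination hs2

private lemma exp_hasDerivAt (c x : ℝ) :
    HasDerivAt (fun y => Real.exp (c * y)) (c * Real.exp (c * x)) x := by
  have h1 : HasDerivAt (fun y : ℝ => c * y) c x := by
    simpa using (hasDerivAt_id x).const_mul c
  simpa [mul_comm, Function.comp_def] using (Real.hasDerivAt_exp (c * x)).comp x h1

/-- Properties of the decreasing fundamental solution `φ_λ` of `ℒf = λf` for the
drifted Oscillating Brownian motion. -/
theorem decreasing_fundamental_solution
    (σp σm bp bm lam : ℝ) (hσp : 0 < σp) (hσm : 0 < σm) (hlam : 0 < lam)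
    (sp sm μm νm νp κm δm : ℝ)
    (hsp : sp = Real.sqrt (bp^2 + 2 * lam * σp^2))
    (hsm : sm = Real.sqrt (bm^2 + 2 * lam * σm^2))
    (hμm : μm = (-bm + sm) / σm^2)
    (hνm : νm = (-bm - sm) / σm^2)
    (hνp : νp = (-bp - sp) / σp^2)
    (hκm : κm = (bp * σm^2 - bm * σp^2 + σm^2 * sp + σp^2 * sm) / (2 * σp^2 * sm))
    (hδm : δm = (bm * σp^2 - bp * σm^2 - σm^2 * sp + σp^2 * sm) / (2 * σp^2 * sm))
    (φ : ℝ → ℝ)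
    (hφ : ∀ x, φ x = if 0 ≤ x then Real.exp (νp * x)
      else κm * Real.exp (νm * x) + δm * Real.exp (μm * x)) :
    (κm + δm = 1 ∧ Continuous φ ∧ φ 0 = 1) ∧
    (Differentiable ℝ φ ∧ deriv φ 0 = νp) ∧
    (∀ x, 0 < x → (σp^2 / 2) * deriv (deriv φ) x + bp * deriv φ x = lam * φ x) ∧
    (∀ x, x < 0 → (σm^2 / 2) * deriv (deriv φ) x + bm * deriv φ x = lam * φ x) ∧
    ((∀ x, 0 < φ x) ∧ StrictAnti φ) ∧
    (Tendsto φ atBot atTop ∧ Tendsto φ atTop (nhds 0)) := by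
  have hσp2 : (0:ℝ) < σp ^ 2 := by positivity
  have hσm2 : (0:ℝ) < σm ^ 2 := by positivity
  have hσpne : σp ≠ 0 := ne_of_gt hσp
  have hσmne : σm ≠ 0 := ne_of_gt hσm
  have hsp2 : sp ^ 2 = bp ^ 2 + 2 * lam * σp ^ 2 := by
    rw [hsp, Real.sq_sqrt (by positivity)]
  have hsm2 : sm ^ 2 = bm ^ 2 + 2 * lam * σm ^ 2 := by
    rw [hsm, Real.sq_sqrt (by positivity)]
  have hsp0 : 0 < sp := by rw [hsp]; exact Real.sqrt_pos.mpr (by positivity)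
  have hsm0 : 0 < sm := by rw [hsm]; exact Real.sqrt_pos.mpr (by positivity)
  have hbpsp : -sp < bp ∧ bp < sp := by
    constructor <;> nlinarith [hsp2, hsp0, mul_pos hlam hσp2]
  have hbmsm : -sm < bm ∧ bm < sm := by
    constructor <;> nlinarith [hsm2, hsm0, mul_pos hlam hσm2]
  have hνp0 : νp < 0 := by
    rw [hνp]; apply div_neg_of_neg_of_pos _ hσp2; linarith [hbpsp.1]
  have hνm0 : νm < 0 := by
    rw [hνm]; apply div_neg_of_neg_of_pos _ hσm2; linarith [hbmsm.1]
  have hμm0 : 0 < μm := by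
    rw [hμm]; apply div_pos _ hσm2; linarith [hbmsm.2]
  have hκm0 : 0 < κm := by
    rw [hκm]; apply div_pos _ (by positivity)
    nlinarith [mul_pos hσm2 (show 0 < bp + sp by linarith [hbpsp.1]),
      mul_pos hσp2 (show 0 < sm - bm by linarith [hbmsm.2])]
  have hsum : κm + δm = 1 := by
    rw [hκm, hδm]; field_simp; ring
  have hmatch : κm * νm + δm * μm = νp := by
    rw [hκm, hδm, hνm, hμm, hνp]; field_simp; ring
  -- root equations
  have hrνp : σp ^ 2 / 2 * νp ^ 2 + bp * νp = lam :=
    root_eq_aux σp bp lam sp νp hσpne hsp2 (Or.inl hνp)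
  have hrνm : σm ^ 2 / 2 * νm ^ 2 + bm * νm = lam :=
    root_eq_aux σm bm lam sm νm hσmne hsm2 (Or.inl hνm)
  have hrμm : σm ^ 2 / 2 * μm ^ 2 + bm * μm = lam :=
    root_eq_aux σm bm lam sm μm hσmne hsm2 (Or.inr hμm)
  -- the two smooth pieces
  have hFd : ∀ x, HasDerivAt (fun y => κm * Real.exp (νm * y) + δm * Real.exp (μm * y))
      (κm * νm * Real.exp (νm * x) + δm * μm * Real.exp (μm * x)) x := by
    intro x
    have := ((exp_hasDerivAt νm x).const_mul κm).add ((exp_hasDerivAt μm x).const_mul δm)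
    exact this.congr_deriv (by ring)
  -- eventual equalities
  have hφG : ∀ x, 0 < x → φ =ᶠ[nhds x] fun y => Real.exp (νp * y) := by
    intro x hx
    filter_upwards [eventually_gt_nhds hx] with y hy
    rw [hφ y, if_pos hy.le]
  have hφF : ∀ x, x < 0 →
      φ =ᶠ[nhds x] fun y => κm * Real.exp (νm * y) + δm * Real.exp (μm * y) := by
    intro x hx
    filter_upwards [eventually_lt_nhds hx] with y hy
    rw [hφ y, if_neg (not_le.mpr hy)]
  -- derivative everywhere
  have hd : ∀ x, HasDerivAt φ (if 0 ≤ x then νp * Real.exp (νp * x)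
      else κm * νm * Real.exp (νm * x) + δm * μm * Real.exp (μm * x)) x := by
    intro x
    rcases lt_trichotomy x 0 with hx | hx | hx
    · rw [if_neg (not_le.mpr hx)]
      exact (hFd x).congr_of_eventuallyEq (hφF x hx)
    · subst hx
      rw [if_pos le_rfl]
      have h1 : HasDerivWithinAt φ (νp * Real.exp (νp * 0)) (Set.Ici 0) 0 := by
        refine (exp_hasDerivAt νp 0).hasDerivWithinAt.congr (fun y hy => ?_) ?_
        · rw [hφ y, if_pos (show (0:ℝ) ≤ y from hy)]
        · rw [hφ 0, if_pos le_rfl]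
      have h2 : HasDerivWithinAt φ (νp * Real.exp (νp * 0)) (Set.Iic 0) 0 := by
        have h2' : HasDerivWithinAt φ
            (κm * νm * Real.exp (νm * 0) + δm * μm * Real.exp (μm * 0)) (Set.Iic 0) 0 := by
          refine (hFd 0).hasDerivWithinAt.congr (fun y hy => ?_) ?_
          · rcases eq_or_lt_of_le (show y ≤ (0:ℝ) from hy) with rfl | hy'
            · simp only [hφ 0, if_pos le_rfl, mul_zero, Real.exp_zero, mul_one]
              linarith [hsum]
            · rw [hφ y, if_neg (not_le.mpr hy')]
          · simp only [hφ 0, if_pos le_rfl, mul_zero, Real.exp_zero, mul_one]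
            linarith [hsum]
        have : κm * νm * Real.exp (νm * 0) + δm * μm * Real.exp (μm * 0)
            = νp * Real.exp (νp * 0) := by
          simp only [mul_zero, Real.exp_zero, mul_one]; exact hmatch
        rwa [this] at h2'
      have h3 := h2.union h1
      rw [Set.Iic_union_Ici] at h3
      exact h3.hasDerivAt (by simp)
    · rw [if_pos hx.le]
      exact (exp_hasDerivAt νp x).congr_of_eventuallyEq (hφG x hx)
  have hderiv : ∀ x, deriv φ x = (if 0 ≤ x then νp * Real.exp (νp * x)
      else κm * νm * Real.exp (νm * x) + δm * μm * Real.exp (μm * x)) :=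
    fun x => (hd x).deriv
  have hdiff : Differentiable ℝ φ := fun x => (hd x).differentiableAt
  have hcont : Continuous φ := hdiff.continuous
  have hφ0 : φ 0 = 1 := by rw [hφ 0, if_pos le_rfl]; simp
  have hderiv0 : deriv φ 0 = νp := by rw [hderiv 0, if_pos le_rfl]; simp
  -- strict antitonicity
  have hderivneg : ∀ x, deriv φ x < 0 := by
    intro x
    rw [hderiv x]
    split_ifs with h
    · exact mul_neg_of_neg_of_pos hνp0 (Real.exp_pos _)
    · push_neg at h
      have hE1 : 1 < Real.exp (νm * x) :=
        Real.one_lt_exp_iff.mpr (mul_pos_of_neg_of_neg hνm0 h)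
      have hE2a : 0 < Real.exp (μm * x) := Real.exp_pos _
      have hE2b : Real.exp (μm * x) < 1 :=
        Real.exp_lt_one_iff.mpr (mul_neg_of_pos_of_neg hμm0 h)
      have hc : κm * νm < 0 := mul_neg_of_pos_of_neg hκm0 hνm0
      have hcd : κm * νm + δm * μm < 0 := by rw [hmatch]; exact hνp0
      rcases le_or_gt (δm * μm) 0 with hdle | hdpos
      · have t1 : κm * νm * Real.exp (νm * x) < 0 :=
          mul_neg_of_neg_of_pos hc (Real.exp_pos _)
        have t2 : δm * μm * Real.exp (μm * x) ≤ 0 := mul_nonpos_of_nonpos_of_nonneg hdle hE2a.le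
        linarith
      · have t1 : κm * νm * Real.exp (νm * x) < κm * νm * 1 :=
          mul_lt_mul_of_neg_left hE1 hc
        have t2 : δm * μm * Real.exp (μm * x) < δm * μm :=
          mul_lt_of_lt_one_right hdpos hE2b
        linarith
  have hanti : StrictAnti φ := strictAnti_of_deriv_neg hderivneg
  have hpos : ∀ x, 0 < φ x := by
    intro x
    rcases le_or_gt 0 x with hx | hx
    · rw [hφ x, if_pos hx]; exact Real.exp_pos _
    · have := hanti hx
      rw [hφ0] at this
      linarith
  refine ⟨⟨hsum, hcont, hφ0⟩, ⟨hdiff, hderiv0⟩, ?_, ?_, ⟨hpos, hanti⟩, ?_, ?_⟩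
  · -- ODE on (0, ∞)
    intro x hx
    have hev : deriv φ =ᶠ[nhds x] fun y => νp * Real.exp (νp * y) := by
      filter_upwards [eventually_gt_nhds hx] with y hy
      rw [hderiv y, if_pos hy.le]
    have h2 : deriv (deriv φ) x = νp * (νp * Real.exp (νp * x)) := by
      rw [hev.deriv_eq]
      exact ((exp_hasDerivAt νp x).const_mul νp).deriv
    rw [h2, hderiv x, if_pos hx.le, hφ x, if_pos hx.le]
    linear_combination Real.exp (νp * x) * hrνp
  · -- ODE on (-∞, 0)
    intro x hx
    have hev : deriv φ =ᶠ[nhds x]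
        fun y => κm * νm * Real.exp (νm * y) + δm * μm * Real.exp (μm * y) := by
      filter_upwards [eventually_lt_nhds hx] with y hy
      rw [hderiv y, if_neg (not_le.mpr hy)]
    have h2 : deriv (deriv φ) x
        = κm * νm * νm * Real.exp (νm * x) + δm * μm * μm * Real.exp (μm * x) := by
      rw [hev.deriv_eq]
      have := ((exp_hasDerivAt νm x).const_mul (κm * νm)).add
        ((exp_hasDerivAt μm x).const_mul (δm * μm))
      exact (this.congr_deriv (by ring)).deriv
    rw [h2, hderiv x, if_neg (not_le.mpr hx), hφ x, if_neg (not_le.mpr hx)]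
    linear_combination (κm * Real.exp (νm * x)) * hrνm + (δm * Real.exp (μm * x)) * hrμm
  · -- tendsto atBot atTop
    have hA : Tendsto (fun y => κm * Real.exp (νm * y)) atBot atTop := by
      refine Tendsto.const_mul_atTop hκm0 ?_
      refine Real.tendsto_exp_atTop.comp ?_
      exact (tendsto_id.const_mul_atBot_of_neg hνm0 : Tendsto (fun y : ℝ => νm * y) atBot atTop)
    have hB : Tendsto (fun y => δm * Real.exp (μm * y)) atBot (nhds (δm * 0)) := by
      refine Tendsto.const_mul δm ?_
      refine Real.tendsto_exp_atBot.comp ?_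
      exact (tendsto_id.const_mul_atBot hμm0 : Tendsto (fun y : ℝ => μm * y) atBot atBot)
    have h := hB.add_atTop hA
    refine h.congr' ?_
    filter_upwards [eventually_lt_atBot (0:ℝ)] with y hy
    rw [hφ y, if_neg (not_le.mpr hy)]; ring
  · -- tendsto atTop (nhds 0)
    have h : Tendsto (fun y => Real.exp (νp * y)) atTop (nhds 0) := by
      refine Real.tendsto_exp_atBot.comp ?_
      exact (tendsto_id.const_mul_atTop_of_neg hνp0 : Tendsto (fun y : ℝ => νp * y) atTop atBot)
    refine h.congr' ?_
    filter_upwards [eventually_ge_atTop (0:ℝ)] with y hy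
    rw [hφ y, if_pos hy]
end

section
/- Let σ₊, σ₋ > 0 and set θ = (σ₋ − σ₊)/(σ₋ + σ₊). Define F : ℝ → ℝ by F(x) = σ₊(1 + θ)·[(2π)^{−1/2}·exp(−x²/2) + x·Φ̄(−x)] for x < 0 and F(x) = σ₋(1 − θ)·[(2π)^{−1/2}·exp(−x²/2) − x·Φ̄(x)] for x ≥ 0, where Φ̄(a) := ∫ₐ^∞ (2π)^{−1/2}·exp(−z²/2) dz. Then (1 + θ)·∫₀^∞ F(x) dx + (1 − θ)·∫_{−∞}^0 F(x) dx = (1 − θ²)(σ₋ + σ₊)/4 = σ₋σ₊/(σ₋ + σ₊). -/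
open MeasureTheory Real Set Filter Topology
set_option maxHeartbeats 1000000

noncomputable def gphi (x : ℝ) : ℝ := (Real.sqrt (2 * Real.pi))⁻¹ * Real.exp (-x^2 / 2)

lemma gphi_nonneg (x : ℝ) : 0 ≤ gphi x := by
  unfold gphi; positivity

lemma gphi_cont : Continuous gphi := by
  unfold gphi; fun_prop

lemma gphi_integrable : Integrable gphi := by
  have h := (integrable_exp_neg_mul_sq (by norm_num : (0:ℝ) < 1/2)).const_mul
    (Real.sqrt (2 * Real.pi))⁻¹
  refine h.congr (Eventually.of_forall fun x => ?_)
  unfold gphi; ring_nf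

lemma id_mul_gphi_integrable : Integrable (fun x => x * gphi x) := by
  have h := (integrable_rpow_mul_exp_neg_mul_sq (by norm_num : (0:ℝ) < 1/2)
    (by norm_num : (-1:ℝ) < 1)).const_mul (Real.sqrt (2 * Real.pi))⁻¹
  refine h.congr (Eventually.of_forall fun x => ?_)
  simp only [Real.rpow_one]
  unfold gphi; ring_nf

lemma gphi_total : ∫ x, gphi x = 1 := by
  have h : ∫ x : ℝ, Real.exp (-(1/2) * x^2) = Real.sqrt (Real.pi / (1/2)) :=
    integral_gaussian (1/2)
  have h2 : (fun x : ℝ => gphi x) = fun x => (Real.sqrt (2 * Real.pi))⁻¹ * Real.exp (-(1/2) * x^2) := by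
    funext x; unfold gphi; ring_nf
  rw [h2, MeasureTheory.integral_const_mul, h]
  have : Real.pi / (1/2) = 2 * Real.pi := by ring
  rw [this, inv_mul_cancel₀]
  positivity

lemma gphi_deriv (x : ℝ) : HasDerivAt gphi (-x * gphi x) x := by
  have h1 : HasDerivAt (fun x : ℝ => -x^2 / 2) (-x) x := by
    have := ((hasDerivAt_pow 2 x).neg).div_const 2
    norm_num at this
    exact this.congr_deriv (by ring)
  have h2 := (h1.exp).const_mul (Real.sqrt (2 * Real.pi))⁻¹
  exact h2.congr_deriv (by unfold gphi; ring)

lemma tendsto_gphi : Tendsto gphi atTop (𝓝 0) := by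
  have h1 : Tendsto (fun x : ℝ => -x^2 / 2) atTop atBot := by
    apply Tendsto.atBot_div_const (by norm_num : (0:ℝ) < 2)
    exact tendsto_neg_atBot_iff.mpr (tendsto_pow_atTop two_ne_zero)
  have h2 : Tendsto (fun x : ℝ => Real.exp (-x^2/2)) atTop (𝓝 0) :=
    Real.tendsto_exp_atBot.comp h1
  have := h2.const_mul (Real.sqrt (2 * Real.pi))⁻¹
  unfold gphi
  simpa only [mul_zero] using this

lemma tendsto_poly_gphi : Tendsto (fun x => (1 + x^2) * gphi x) atTop (𝓝 0) := by
  have hg : Tendsto (fun y : ℝ => Real.exp (-y) + 2 * (y^1 * Real.exp (-y))) atTop (𝓝 0) := by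
    have := (Real.tendsto_exp_neg_atTop_nhds_zero).add
      ((Real.tendsto_pow_mul_exp_neg_atTop_nhds_zero 1).const_mul 2)
    simpa using this
  have hsq : Tendsto (fun x : ℝ => x^2 / 2) atTop atTop :=
    (tendsto_pow_atTop two_ne_zero).atTop_div_const (by norm_num)
  have hc := (hg.comp hsq).const_mul (Real.sqrt (2 * Real.pi))⁻¹
  rw [mul_zero] at hc
  refine hc.congr fun x => ?_
  simp only [Function.comp_apply]
  unfold gphi
  rw [show -x^2/2 = -(x^2/2) by ring, Real.exp_neg]
  ring

/-- The limiting constant in the local-time estimator: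
`(1+θ)∫₀^∞ F + (1−θ)∫_{−∞}^0 F = (1−θ²)(σ₋+σ₊)/4 = σ₋σ₊/(σ₋+σ₊)`. -/
theorem local_time_constant (σp σm : ℝ) (hσp : 0 < σp) (hσm : 0 < σm)
    (θ : ℝ) (hθ : θ = (σm - σp) / (σm + σp))
    (Φc : ℝ → ℝ)
    (hΦc : ∀ a, Φc a = ∫ z in Set.Ioi a,
      (Real.sqrt (2 * Real.pi))⁻¹ * Real.exp (-z^2 / 2))
    (F : ℝ → ℝ)
    (hF : ∀ x, F x = if x < 0 then
        σp * (1 + θ) * ((Real.sqrt (2 * Real.pi))⁻¹ * Real.exp (-x^2 / 2) + x * Φc (-x))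
      else
        σm * (1 - θ) * ((Real.sqrt (2 * Real.pi))⁻¹ * Real.exp (-x^2 / 2) - x * Φc x)) :
    (1 + θ) * (∫ x in Set.Ioi (0:ℝ), F x) + (1 - θ) * (∫ x in Set.Iio (0:ℝ), F x)
        = (1 - θ^2) * (σm + σp) / 4 ∧
    (1 - θ^2) * (σm + σp) / 4 = σm * σp / (σm + σp) := by
  have hsum : (0:ℝ) < σm + σp := by linarith
  have part2 : (1 - θ^2) * (σm + σp) / 4 = σm * σp / (σm + σp) := by
    subst hθ
    field_simp
    ring
  refine ⟨?_, part2⟩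
  have hΦc' : ∀ a, Φc a = ∫ z in Set.Ioi a, gphi z := hΦc
  have hΦc_nonneg : ∀ a, 0 ≤ Φc a := fun a => by
    rw [hΦc' a]
    exact setIntegral_nonneg measurableSet_Ioi fun x _ => gphi_nonneg x
  have hIic : ∀ a : ℝ, (∫ x in Set.Iic a, gphi x) + Φc a = 1 := fun a => by
    rw [hΦc' a, intervalIntegral.integral_Iic_add_Ioi gphi_integrable.integrableOn
      gphi_integrable.integrableOn, gphi_total]
  have hsymm : (∫ x in Set.Iic (0:ℝ), gphi x) = Φc 0 := by
    rw [hΦc' 0]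
    have h0 := integral_comp_neg_Ioi (0:ℝ) gphi
    rw [neg_zero] at h0
    rw [← h0]
    refine (setIntegral_congr_fun measurableSet_Ioi fun x _ => ?_).symm
    unfold gphi; rw [neg_sq]
  have hΦc0 : Φc 0 = 1/2 := by
    have := hIic 0
    rw [hsymm] at this
    linarith
  have hrepr : ∀ a : ℝ, Φc a = Φc 0 - ∫ x in (0:ℝ)..a, gphi x := by
    intro a
    have h1 : (∫ x in Set.Iic a, gphi x) - ∫ x in Set.Iic (0:ℝ), gphi x
        = ∫ x in (0:ℝ)..a, gphi x :=
      intervalIntegral.integral_Iic_sub_Iic gphi_integrable.integrableOn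
        gphi_integrable.integrableOn
    have e1 := hIic a
    have e2 := hIic 0
    linarith
  have hΦcderiv : ∀ a : ℝ, HasDerivAt Φc (-(gphi a)) a := by
    intro a
    have h := ((gphi_cont.integral_hasStrictDerivAt 0 a).hasDerivAt).const_sub (Φc 0)
    exact h.congr_of_eventuallyEq (Filter.Eventually.of_forall fun x => hrepr x)
  have hΦc_cont : Continuous Φc :=
    continuous_iff_continuousAt.mpr fun a => (hΦcderiv a).continuousAt
  have mills : ∀ x : ℝ, x * Φc x ≤ gphi x := by
    intro x
    have hderiv : ∀ t ∈ Set.Ici x, HasDerivAt (fun t => -gphi t) (t * gphi t) t := by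
      intro t _
      have := (gphi_deriv t).neg
      exact this.congr_deriv (by ring)
    have htd : Tendsto (fun t => -gphi t) atTop (𝓝 0) := by
      simpa using tendsto_gphi.neg
    have hJ := integral_Ioi_of_hasDerivAt_of_tendsto' hderiv
      id_mul_gphi_integrable.integrableOn htd
    have hx1 : x * Φc x = ∫ t in Set.Ioi x, x * gphi t := by
      rw [hΦc' x, MeasureTheory.integral_const_mul]
    rw [hx1]
    calc (∫ t in Set.Ioi x, x * gphi t) ≤ ∫ t in Set.Ioi x, t * gphi t := by
          apply setIntegral_mono_on (gphi_integrable.const_mul x).integrableOn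
            id_mul_gphi_integrable.integrableOn measurableSet_Ioi
          intro t ht
          exact mul_le_mul_of_nonneg_right (le_of_lt ht) (gphi_nonneg t)
      _ = gphi x := by rw [hJ]; ring
  have l1 : Tendsto (fun x => (1 + x^2) * Φc x) atTop (𝓝 0) := by
    refine squeeze_zero' ?_ ?_ tendsto_poly_gphi
    · exact Filter.Eventually.of_forall fun x =>
        mul_nonneg (by positivity) (hΦc_nonneg x)
    · filter_upwards [eventually_ge_atTop (1:ℝ)] with x hx
      have h1 : Φc x ≤ gphi x := by nlinarith [mills x, hΦc_nonneg x]
      exact mul_le_mul_of_nonneg_left h1 (by positivity)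
  have l2 : Tendsto (fun x => x * gphi x) atTop (𝓝 0) := by
    refine squeeze_zero' ?_ ?_ tendsto_poly_gphi
    · filter_upwards [eventually_ge_atTop (0:ℝ)] with x hx
      exact mul_nonneg hx (gphi_nonneg x)
    · exact Filter.Eventually.of_forall fun x =>
        mul_le_mul_of_nonneg_right (by nlinarith) (gphi_nonneg x)
  have hHderiv : ∀ x : ℝ,
      HasDerivAt (fun y => y/2 * gphi y - (1+y^2)/2 * Φc y) (gphi x - x * Φc x) x := by
    intro x
    have ha : HasDerivAt (fun y : ℝ => 1 + y^2) (2*x) x := by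
      simpa using (hasDerivAt_pow 2 x).const_add 1
    have h1 := ((hasDerivAt_id' x).div_const 2).mul (gphi_deriv x)
    have h2 := (ha.div_const 2).mul (hΦcderiv x)
    have h3 := h1.sub h2
    exact h3.congr_deriv (by ring)
  have hint : IntegrableOn (fun x => gphi x - x * Φc x) (Set.Ioi (0:ℝ)) := by
    apply Integrable.sub gphi_integrable.integrableOn
    apply Integrable.mono' gphi_integrable.integrableOn
    · exact ((continuous_id.mul hΦc_cont).aestronglyMeasurable).restrict
    · filter_upwards [ae_restrict_mem measurableSet_Ioi] with t ht
      rw [Real.norm_eq_abs, abs_of_nonneg (mul_nonneg (le_of_lt ht) (hΦc_nonneg t))]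
      exact mills t
  have htend0 : Tendsto (fun x => 1/2 * (x * gphi x) - 1/2 * ((1+x^2) * Φc x)) atTop
      (𝓝 (1/2 * 0 - 1/2 * 0)) := (l2.const_mul (1/2)).sub (l1.const_mul (1/2))
  rw [show (1/2 : ℝ) * 0 - 1/2 * 0 = 0 by ring] at htend0
  have htend : Tendsto (fun x => x/2 * gphi x - (1+x^2)/2 * Φc x) atTop (𝓝 0) :=
    htend0.congr fun x => by ring
  have key : (∫ x in Set.Ioi (0:ℝ), (gphi x - x * Φc x)) = 1/4 := by
    have := integral_Ioi_of_hasDerivAt_of_tendsto' (fun x _ => hHderiv x) hint htend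
    rw [this, hΦc0]
    norm_num
  have hIoi : (∫ x in Set.Ioi (0:ℝ), F x) = σm * (1-θ) * (1/4) := by
    rw [show (∫ x in Set.Ioi (0:ℝ), F x)
        = ∫ x in Set.Ioi (0:ℝ), σm * (1-θ) * (gphi x - x * Φc x) from
      setIntegral_congr_fun measurableSet_Ioi fun x hx => by
        rw [hF x, if_neg (not_lt.mpr (le_of_lt (show (0:ℝ) < x from hx)))]
        simp only [gphi]]
    rw [MeasureTheory.integral_const_mul, key]
  have hIio : (∫ x in Set.Iio (0:ℝ), F x) = σp * (1+θ) * (1/4) := by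
    have h1 : (∫ x in Set.Iio (0:ℝ), F x)
        = ∫ x in Set.Iio (0:ℝ), σp * (1+θ) * (gphi x + x * Φc (-x)) :=
      setIntegral_congr_fun measurableSet_Iio fun x hx => by
        rw [hF x, if_pos (show x < 0 from hx)]
        simp only [gphi]
    have h2 := integral_comp_neg_Ioi (0:ℝ)
      (fun x => σp * (1+θ) * (gphi x + x * Φc (-x)))
    rw [neg_zero] at h2
    rw [h1, ← integral_Iic_eq_integral_Iio, ← h2]
    rw [show (∫ x in Set.Ioi (0:ℝ),
          σp * (1+θ) * (gphi (-x) + (-x) * Φc (-(-x))))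
        = ∫ x in Set.Ioi (0:ℝ), σp * (1+θ) * (gphi x - x * Φc x) from
      setIntegral_congr_fun measurableSet_Ioi fun x _ => by
        rw [neg_neg]
        unfold gphi
        rw [neg_sq]
        ring]
    rw [MeasureTheory.integral_const_mul, key]
  rw [hIoi, hIio]
  ring
end

section
/- Let t > 0, σ > 0, b ∈ ℝ and λ ≥ 0. Then ∫₀^∞ exp(−λs) · (t/(2σ√(2π)·s^{3/2})) · exp(tb/(2σ²) − b²s/(2σ²) − t²/(8σ²s)) ds = exp((t/(2σ²))·(b − √(b² + 2σ²λ))). -/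
open Real MeasureTheory Set

lemma deriv_phi {α β : ℝ} {s : ℝ} (hs : 0 < s) :
    HasDerivAt (fun x => α * Real.sqrt x - β / Real.sqrt x)
      (α / (2 * Real.sqrt s) + β / (2 * (s * Real.sqrt s))) s := by
  have hsq : Real.sqrt s ≠ 0 := by positivity
  have h1 := Real.hasDerivAt_sqrt hs.ne'
  have h3 := (h1.const_mul α).sub ((hasDerivAt_const s β).div h1 hsq)
  refine h3.congr_deriv ?_
  have h : Real.sqrt s ^ 2 = s := Real.sq_sqrt hs.le
  field_simp
  ring_nf
  rw [h]
  ring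

lemma phi_inj {α β : ℝ} (hα : 0 < α) (hβ : 0 < β) :
    Set.InjOn (fun s => α * Real.sqrt s - β / Real.sqrt s) (Set.Ioi 0) := by
  have : StrictMonoOn (fun s => α * Real.sqrt s - β / Real.sqrt s) (Set.Ioi 0) := by
    intro x hx y hy hxy
    have hx' : (0:ℝ) < x := hx
    have h1 : Real.sqrt x < Real.sqrt y := Real.sqrt_lt_sqrt hx'.le hxy
    have hsx : (0:ℝ) < Real.sqrt x := Real.sqrt_pos.2 hx'
    have h2 : β / Real.sqrt y < β / Real.sqrt x := div_lt_div_of_pos_left hβ hsx h1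
    have h3 : α * Real.sqrt x < α * Real.sqrt y := mul_lt_mul_of_pos_left h1 hα
    dsimp only
    linarith
  exact this.injOn

lemma phi_surj {α β : ℝ} (hα : 0 < α) (hβ : 0 < β) :
    (fun s => α * Real.sqrt s - β / Real.sqrt s) '' (Set.Ioi 0) = Set.univ := by
  apply Set.eq_univ_of_forall
  intro u
  set d := Real.sqrt (u^2 + 4*α*β) with hd
  have hd2 : d^2 = u^2 + 4*α*β := Real.sq_sqrt (by positivity)
  have hd0 : 0 ≤ d := Real.sqrt_nonneg _
  have h1 : u < d := by nlinarith
  have h2 : -d < u := by nlinarith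
  set w := (u + d)/(2*α) with hw
  have hw0 : 0 < w := div_pos (by linarith) (by linarith)
  refine ⟨w^2, Set.mem_Ioi.mpr (by positivity), ?_⟩
  have hsw : Real.sqrt (w^2) = w := Real.sqrt_sq hw0.le
  dsimp only
  rw [hsw]
  have hwne : w ≠ 0 := hw0.ne'
  have hkey : α * w^2 - β = u * w := by
    rw [hw]; field_simp; nlinarith [hd2]
  field_simp
  nlinarith [hkey]

lemma keypos {α β : ℝ} (hα : 0 < α) (hβ : 0 < β) :
    ∫ s in Set.Ioi (0:ℝ),
        1/(s * Real.sqrt s) * Real.exp (-(α * Real.sqrt s - β / Real.sqrt s)^2)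
      = Real.sqrt Real.pi / β := by
  set φ : ℝ → ℝ := fun s => α * Real.sqrt s - β / Real.sqrt s with hφ
  set φ' : ℝ → ℝ := fun s => α / (2 * Real.sqrt s) + β / (2 * (s * Real.sqrt s)) with hφ'
  have hder : ∀ s ∈ Set.Ioi (0:ℝ), HasDerivWithinAt φ (φ' s) (Set.Ioi 0) s :=
    fun s hs => (deriv_phi hs).hasDerivWithinAt
  have hφpos : ∀ s ∈ Set.Ioi (0:ℝ), 0 < φ' s := by
    intro s hs
    have hs' : (0:ℝ) < s := hs
    have : (0:ℝ) < Real.sqrt s := Real.sqrt_pos.2 hs'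
    positivity
  -- change of variables
  have hcv := integral_image_eq_integral_abs_deriv_smul measurableSet_Ioi hder
      (phi_inj hα hβ) (fun u => Real.exp (-u^2))
  rw [phi_surj hα hβ] at hcv
  have hL : (∫ u in (Set.univ : Set ℝ), Real.exp (-u^2)) = Real.sqrt Real.pi := by
    rw [setIntegral_univ]
    simpa using integral_gaussian 1
  -- integrability of the full integrand
  have hint0 : IntegrableOn (fun s => |φ' s| • Real.exp (-(φ s)^2)) (Set.Ioi 0) := by
    apply (integrableOn_image_iff_integrableOn_abs_deriv_smul measurableSet_Ioi hder
        (phi_inj hα hβ) (fun u => Real.exp (-u^2))).mp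
    rw [phi_surj hα hβ, IntegrableOn, Measure.restrict_univ]
    simpa using integrable_exp_neg_mul_sq (one_pos (α := ℝ))
  have habs : Set.EqOn (fun s => |φ' s| • Real.exp (-(φ s)^2))
      (fun s => φ' s * Real.exp (-(φ s)^2)) (Set.Ioi 0) := by
    intro s hs
    simp [abs_of_pos (hφpos s hs)]
  have hint : IntegrableOn (fun s => φ' s * Real.exp (-(φ s)^2)) (Set.Ioi 0) :=
    hint0.congr_fun habs measurableSet_Ioi
  have hH : Real.sqrt Real.pi = ∫ s in Set.Ioi (0:ℝ), φ' s * Real.exp (-(φ s)^2) := by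
    rw [← setIntegral_congr_fun measurableSet_Ioi habs, ← hcv, hL]
  set h1 : ℝ → ℝ := fun s => α / (2 * Real.sqrt s) * Real.exp (-(φ s)^2) with hh1
  set h2 : ℝ → ℝ := fun s => β / (2 * (s * Real.sqrt s)) * Real.exp (-(φ s)^2) with hh2
  have hmeas1 : AEStronglyMeasurable h1 (volume.restrict (Set.Ioi 0)) := by
    apply Measurable.aestronglyMeasurable
    fun_prop
  have hmeas2 : AEStronglyMeasurable h2 (volume.restrict (Set.Ioi 0)) := by
    apply Measurable.aestronglyMeasurable
    fun_prop
  have hb1 : ∀ᵐ s ∂(volume.restrict (Set.Ioi 0)), ‖h1 s‖ ≤ φ' s * Real.exp (-(φ s)^2) := by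
    filter_upwards [ae_restrict_mem measurableSet_Ioi] with s hs
    have hs' : (0:ℝ) < s := hs
    have hsr : (0:ℝ) < Real.sqrt s := Real.sqrt_pos.2 hs'
    have he : (0:ℝ) < Real.exp (-(φ s)^2) := Real.exp_pos _
    have hexp : φ' s * Real.exp (-(φ s)^2) = h1 s + h2 s := by
      simp only [hh1, hh2, hφ']; ring
    rw [Real.norm_eq_abs, abs_of_nonneg (by positivity), hexp]
    have : (0:ℝ) ≤ h2 s := by simp only [hh2]; positivity
    linarith
  have hb2 : ∀ᵐ s ∂(volume.restrict (Set.Ioi 0)), ‖h2 s‖ ≤ φ' s * Real.exp (-(φ s)^2) := by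
    filter_upwards [ae_restrict_mem measurableSet_Ioi] with s hs
    have hs' : (0:ℝ) < s := hs
    have hsr : (0:ℝ) < Real.sqrt s := Real.sqrt_pos.2 hs'
    have he : (0:ℝ) < Real.exp (-(φ s)^2) := Real.exp_pos _
    have hexp : φ' s * Real.exp (-(φ s)^2) = h1 s + h2 s := by
      simp only [hh1, hh2, hφ']; ring
    rw [Real.norm_eq_abs, abs_of_nonneg (by positivity), hexp]
    have : (0:ℝ) ≤ h1 s := by simp only [hh1]; positivity
    linarith
  have hint1 : IntegrableOn h1 (Set.Ioi 0) := Integrable.mono' hint hmeas1 hb1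
  have hint2 : IntegrableOn h2 (Set.Ioi 0) := Integrable.mono' hint hmeas2 hb2
  have hsum : Set.EqOn (fun s => φ' s * Real.exp (-(φ s)^2)) (fun s => h1 s + h2 s)
      (Set.Ioi 0) := by
    intro s hs; simp only [hh1, hh2, hφ']; ring
  have hsplit : Real.sqrt Real.pi
      = (∫ s in Set.Ioi (0:ℝ), h1 s) + ∫ s in Set.Ioi (0:ℝ), h2 s := by
    rw [hH, setIntegral_congr_fun measurableSet_Ioi hsum, integral_add hint1 hint2]
  -- the reflection substitution
  set c : ℝ := (β/α)^2 with hc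
  have hc0 : (0:ℝ) < c := by positivity
  set ψ : ℝ → ℝ := fun r => c / r with hψ
  have hderψ : ∀ r ∈ Set.Ioi (0:ℝ), HasDerivWithinAt ψ (-(c / r^2)) (Set.Ioi 0) r := by
    intro r hr
    have hr' : (0:ℝ) < r := hr
    have h2' : HasDerivAt ψ ((0 * r - c * 1)/r^2) r :=
      (hasDerivAt_const r c).div (hasDerivAt_id r) hr'.ne'
    have : HasDerivAt ψ (-(c / r^2)) r := by convert h2' using 1; ring
    exact this.hasDerivWithinAt
  have hinjψ : Set.InjOn ψ (Set.Ioi 0) := by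
    intro x hx y hy h
    have hx' : (0:ℝ) < x := hx
    have hy' : (0:ℝ) < y := hy
    simp only [hψ] at h
    rw [div_eq_div_iff hx'.ne' hy'.ne'] at h
    exact mul_left_cancel₀ hc0.ne' (by linarith)
  have himgψ : ψ '' Set.Ioi 0 = Set.Ioi 0 := by
    apply Set.Subset.antisymm
    · rintro u ⟨r, hr, rfl⟩
      have hr' : (0:ℝ) < r := hr
      exact Set.mem_Ioi.mpr (by positivity)
    · intro u hu
      have hu' : (0:ℝ) < u := hu
      exact ⟨c/u, Set.mem_Ioi.mpr (by positivity), by simp only [hψ]; field_simp⟩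
  have hcv2 := integral_image_eq_integral_abs_deriv_smul measurableSet_Ioi hderψ hinjψ h1
  rw [himgψ] at hcv2
  have heq : Set.EqOn (fun r => |(-(c / r^2))| • h1 (ψ r)) h2 (Set.Ioi 0) := by
    intro r hr
    have hr' : (0:ℝ) < r := hr
    have hsr : (0:ℝ) < Real.sqrt r := Real.sqrt_pos.2 hr'
    have hrr : Real.sqrt r * Real.sqrt r = r := Real.mul_self_sqrt hr'.le
    have hsc : Real.sqrt (c/r) = (β/α) / Real.sqrt r := by
      rw [hc, Real.sqrt_div (sq_nonneg _), Real.sqrt_sq (by positivity)]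
    have hφψ : φ (ψ r) = -(φ r) := by
      simp only [hφ, hψ]
      rw [hsc]
      field_simp
      ring
    have habs2 : |(-(c / r^2))| = c/r^2 := by
      rw [abs_neg, abs_of_pos (by positivity)]
    have hφψ' : φ (c / r) = -(φ r) := hφψ
    simp only [smul_eq_mul, habs2, hh1, hh2, hφψ, hψ, hφψ', neg_neg, neg_sq]
    rw [hsc]
    set E := Real.exp (-(φ r)^2) with hE
    rw [hc]
    field_simp
    ring_nf
    linear_combination E * hrr
  rw [setIntegral_congr_fun measurableSet_Ioi heq] at hcv2
  have hI2 : (∫ s in Set.Ioi (0:ℝ), h2 s)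
      = (β/2) * ∫ s in Set.Ioi (0:ℝ),
          1/(s * Real.sqrt s) * Real.exp (-(α * Real.sqrt s - β / Real.sqrt s)^2) := by
    rw [← MeasureTheory.integral_const_mul]
    apply setIntegral_congr_fun measurableSet_Ioi
    intro s hs
    simp only [hh2, hφ]
    ring
  rw [hcv2, hI2] at hsplit
  rw [eq_div_iff hβ.ne']
  linarith

lemma key0 {β : ℝ} (hβ : 0 < β) :
    ∫ s in Set.Ioi (0:ℝ), 1/(s * Real.sqrt s) * Real.exp (-(β^2) / s)
      = Real.sqrt Real.pi / β := by
  set f : ℝ → ℝ := fun s => β / Real.sqrt s with hf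
  have hder : ∀ s ∈ Set.Ioi (0:ℝ),
      HasDerivWithinAt f (-(β / (2 * (s * Real.sqrt s)))) (Set.Ioi 0) s := by
    intro s hs
    have hs' : (0:ℝ) < s := hs
    have h2 : HasDerivAt (fun x => -(0 * Real.sqrt x - β / Real.sqrt x))
        (-(0 / (2 * Real.sqrt s) + β / (2 * (s * Real.sqrt s)))) s :=
      (deriv_phi (α := 0) (β := β) hs').neg
    have : HasDerivAt f (-(β / (2 * (s * Real.sqrt s)))) s := by
      convert h2 using 2 <;> ring
    exact this.hasDerivWithinAt
  have hinj : Set.InjOn f (Set.Ioi 0) := by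
    intro x hx y hy h
    have hx' : (0:ℝ) < x := hx
    have hy' : (0:ℝ) < y := hy
    have hsx : Real.sqrt x ≠ 0 := by positivity
    have hsy : Real.sqrt y ≠ 0 := by positivity
    have hxy : Real.sqrt x = Real.sqrt y := by
      simp only [hf] at h
      rw [div_eq_div_iff hsx hsy] at h
      exact (mul_left_cancel₀ hβ.ne' h).symm
    have := congrArg (fun z => z^2) hxy
    simpa [Real.sq_sqrt hx'.le, Real.sq_sqrt hy'.le] using this
  have himg : f '' Set.Ioi 0 = Set.Ioi 0 := by
    apply Set.Subset.antisymm
    · rintro u ⟨s, hs, rfl⟩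
      have hs' : (0:ℝ) < s := hs
      exact Set.mem_Ioi.mpr (by positivity)
    · intro u hu
      have hu' : (0:ℝ) < u := hu
      refine ⟨β^2 / u^2, Set.mem_Ioi.mpr (by positivity), ?_⟩
      have : Real.sqrt (β^2 / u^2) = β / u := by
        rw [Real.sqrt_div (sq_nonneg β), Real.sqrt_sq hβ.le, Real.sqrt_sq hu'.le]
      simp only [hf, this]
      field_simp
  have hcv := integral_image_eq_integral_abs_deriv_smul measurableSet_Ioi hder hinj
      (fun u => Real.exp (-u^2))
  rw [himg] at hcv
  have hL : ∫ (x : ℝ) in Set.Ioi (0:ℝ), Real.exp (-x ^ 2) = Real.sqrt Real.pi / 2 := by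
    have := integral_gaussian_Ioi 1
    simpa using this
  have hR : (∫ (x : ℝ) in Set.Ioi (0:ℝ),
        |(-(β / (2 * (x * Real.sqrt x))))| • Real.exp (-(β/Real.sqrt x) ^ 2))
      = (β/2) * ∫ s in Set.Ioi (0:ℝ), 1/(s * Real.sqrt s) * Real.exp (-(β^2) / s) := by
    rw [← MeasureTheory.integral_const_mul (β/2) _]
    apply setIntegral_congr_fun measurableSet_Ioi
    intro x hx
    have hx' : (0:ℝ) < x := hx
    have hsx : (0:ℝ) < Real.sqrt x := Real.sqrt_pos.2 hx'
    have h1 : |(-(β / (2 * (x * Real.sqrt x))))| = β / (2 * (x * Real.sqrt x)) := by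
      rw [abs_neg, abs_of_pos (by positivity)]
    have h2 : (β / Real.sqrt x) ^ 2 = β^2 / x := by
      rw [div_pow, Real.sq_sqrt hx'.le]
    simp only [smul_eq_mul]; rw [h1, h2]
    field_simp
  rw [hL, hR] at hcv
  field_simp at hcv ⊢
  linarith

lemma key {α β : ℝ} (hα : 0 ≤ α) (hβ : 0 < β) :
    ∫ s in Set.Ioi (0:ℝ), 1/(s * Real.sqrt s) * Real.exp (-α^2 * s - β^2 / s)
      = Real.sqrt Real.pi / β * Real.exp (-(2*α*β)) := by
  rcases hα.eq_or_lt with rfl | hα'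
  · have h : Set.EqOn (fun s : ℝ => 1/(s * Real.sqrt s) * Real.exp (-(0:ℝ)^2 * s - β^2 / s))
        (fun s : ℝ => 1/(s * Real.sqrt s) * Real.exp (-(β^2) / s)) (Set.Ioi 0) := by
      intro s hs
      dsimp only
      rw [show -(0:ℝ)^2 * s - β^2/s = -(β^2)/s by ring]
    rw [setIntegral_congr_fun measurableSet_Ioi h, key0 hβ]
    norm_num
  · have h : Set.EqOn (fun s : ℝ => 1/(s * Real.sqrt s) * Real.exp (-α^2 * s - β^2 / s))
        (fun s : ℝ => Real.exp (-(2*α*β)) *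
          (1/(s * Real.sqrt s) * Real.exp (-(α * Real.sqrt s - β / Real.sqrt s)^2)))
        (Set.Ioi 0) := by
      intro s hs
      have hs' : (0:ℝ) < s := hs
      have hsr : (0:ℝ) < Real.sqrt s := Real.sqrt_pos.2 hs'
      have hrr : Real.sqrt s * Real.sqrt s = s := Real.mul_self_sqrt hs'.le
      have ha : (α * Real.sqrt s)^2 = α^2 * s := by rw [mul_pow, Real.sq_sqrt hs'.le]
      have hb : (β / Real.sqrt s)^2 = β^2 / s := by rw [div_pow, Real.sq_sqrt hs'.le]
      have hab : α * Real.sqrt s * (β / Real.sqrt s) = α * β := by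
        field_simp
      have hexp : -α^2 * s - β^2 / s
          = -(α * Real.sqrt s - β / Real.sqrt s)^2 + -(2*α*β) := by
        have hinv : Real.sqrt s * (Real.sqrt s)⁻¹ = 1 := mul_inv_cancel₀ hsr.ne'
        rw [sub_sq, ha, hb]
        linear_combination 2*hab - 4*α*β*hinv
      dsimp only
      rw [hexp, Real.exp_add]
      ring
    rw [setIntegral_congr_fun measurableSet_Ioi h, MeasureTheory.integral_const_mul,
      keypos hα' hβ]
    ring

/-- Laplace transform identity for the conditional density of the occupation time
given the local time. -/
theorem occupation_time_laplace (t σ b lam : ℝ) (ht : 0 < t) (hσ : 0 < σ)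
    (hlam : 0 ≤ lam) :
    (∫ s in Set.Ioi (0:ℝ),
        Real.exp (-lam * s)
          * (t / (2 * σ * Real.sqrt (2 * Real.pi) * s ^ ((3:ℝ)/2)))
          * Real.exp (t * b / (2 * σ^2) - b^2 * s / (2 * σ^2) - t^2 / (8 * σ^2 * s)))
      = Real.exp ((t / (2 * σ^2)) * (b - Real.sqrt (b^2 + 2 * σ^2 * lam))) := by
  set A := Real.sqrt (lam + b^2/(2*σ^2)) with hA
  set B := t / (2 * Real.sqrt 2 * σ) with hB
  have h2 : Real.sqrt 2 * Real.sqrt 2 = 2 := Real.mul_self_sqrt (by norm_num)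
  have hs2 : (0:ℝ) < Real.sqrt 2 := Real.sqrt_pos.2 (by norm_num)
  have hA0 : 0 ≤ A := Real.sqrt_nonneg _
  have hB0 : 0 < B := by rw [hB]; positivity
  have hA2 : A^2 = lam + b^2/(2*σ^2) := Real.sq_sqrt (by positivity)
  have hB2 : B^2 = t^2 / (8*σ^2) := by
    rw [hB]; field_simp; ring_nf; nlinarith [h2]
  set C := t / (2 * σ * Real.sqrt (2*Real.pi)) * Real.exp (t * b / (2 * σ^2)) with hC
  have hcong : Set.EqOn
      (fun s : ℝ => Real.exp (-lam * s)
          * (t / (2 * σ * Real.sqrt (2 * Real.pi) * s ^ ((3:ℝ)/2)))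
          * Real.exp (t * b / (2 * σ^2) - b^2 * s / (2 * σ^2) - t^2 / (8 * σ^2 * s)))
      (fun s : ℝ => C * (1/(s * Real.sqrt s) * Real.exp (-A^2 * s - B^2 / s)))
      (Set.Ioi 0) := by
    intro s hs
    have hs' : (0:ℝ) < s := hs
    have hsr : (0:ℝ) < Real.sqrt s := Real.sqrt_pos.2 hs'
    have hpow : s ^ ((3:ℝ)/2) = s * Real.sqrt s := by
      rw [show (3:ℝ)/2 = 1 + 1/2 by norm_num, Real.rpow_add hs', Real.rpow_one,
        ← Real.sqrt_eq_rpow]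
    have hexp : -lam * s + (t * b / (2 * σ^2) - b^2 * s / (2 * σ^2) - t^2 / (8 * σ^2 * s))
        = t * b / (2 * σ^2) + (-A^2 * s - B^2 / s) := by
      rw [hA2, hB2]; field_simp; ring
    dsimp only
    rw [hC, hpow]
    rw [show Real.exp (-lam * s) * (t / (2 * σ * Real.sqrt (2 * Real.pi) * (s * Real.sqrt s)))
          * Real.exp (t * b / (2 * σ^2) - b^2 * s / (2 * σ^2) - t^2 / (8 * σ^2 * s))
        = t / (2 * σ * Real.sqrt (2 * Real.pi)) * (1/(s * Real.sqrt s))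
          * Real.exp (-lam * s + (t * b / (2 * σ^2) - b^2 * s / (2 * σ^2)
            - t^2 / (8 * σ^2 * s))) by rw [Real.exp_add]; ring]
    rw [hexp, Real.exp_add]
    ring
  rw [setIntegral_congr_fun measurableSet_Ioi hcong, MeasureTheory.integral_const_mul,
    key hA0 hB0]
  -- final algebra
  have hsqrtpi : Real.sqrt (2*Real.pi) = Real.sqrt 2 * Real.sqrt Real.pi :=
    Real.sqrt_mul (by norm_num) _
  have hpi : (0:ℝ) < Real.sqrt Real.pi := Real.sqrt_pos.2 Real.pi_pos
  have hCB : C * (Real.sqrt Real.pi / B) = Real.exp (t * b / (2 * σ^2)) := by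
    rw [hC, hB, hsqrtpi]
    field_simp
  have hAeq : A = Real.sqrt (b^2 + 2*σ^2*lam) / (Real.sqrt 2 * σ) := by
    rw [hA, show lam + b^2/(2*σ^2) = (b^2 + 2*σ^2*lam) / (2*σ^2) by field_simp; ring,
      Real.sqrt_div (by positivity), show (2:ℝ)*σ^2 = (Real.sqrt 2 * σ)^2 by
        rw [mul_pow]; rw [Real.sq_sqrt (by norm_num : (0:ℝ) ≤ 2)],
      Real.sqrt_sq (by positivity)]
  have h2AB : 2*A*B = t * Real.sqrt (b^2 + 2*σ^2*lam) / (2*σ^2) := by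
    rw [hAeq, hB]
    field_simp
    linear_combination (-Real.sqrt (b^2 + 2*σ^2*lam)) * h2
  calc C * (Real.sqrt Real.pi / B * Real.exp (-(2*A*B)))
      = C * (Real.sqrt Real.pi / B) * Real.exp (-(2*A*B)) := by ring
    _ = Real.exp (t * b / (2 * σ^2)) * Real.exp (-(2*A*B)) := by rw [hCB]
    _ = Real.exp (t * b / (2 * σ^2) + -(2*A*B)) := (Real.exp_add _ _).symm
    _ = Real.exp ((t / (2 * σ^2)) * (b - Real.sqrt (b^2 + 2 * σ^2 * lam))) := by
        rw [h2AB]; congr 1; field_simp; ring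
end

section
/- Let σ₊, σ₋ > 0, b₊ > 0 and b₋ ∈ ℝ. Set c = b₊/σ₊² + max(−b₋, 0)/σ₋², p(s, t) = (c·t/(2√(2π)·σ₋·s^{3/2}))·exp((b₋/(2σ₋²) − b₊/σ₊²)·t − b₋²s/(2σ₋²) − t²/(8σ₋²s)) for s, t > 0, and p_R(r) = (c·r/(√2·σ₋))·(2rb₊/σ₊² + (r − b₋)²/(2σ₋²))^{−3/2} for r > 0. Then for every r > 0, 2·∫₀^∞ s·p(s, 2rs) ds = p_R(r). -/
/-- The density of the ratio `R = L_∞(ξ)/(2Q⁻_∞)` obtained from the joint density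
`p(s,t)` via the change of variables `t = 2rs`. -/
theorem ratio_density_from_joint (σp σm bp bm : ℝ) (hσp : 0 < σp) (hσm : 0 < σm)
    (hbp : 0 < bp)
    (c : ℝ) (hc : c = bp / σp^2 + max (-bm) 0 / σm^2)
    (p : ℝ → ℝ → ℝ)
    (hp : ∀ s t, p s t =
      (c * t / (2 * Real.sqrt (2 * Real.pi) * σm * s ^ ((3:ℝ)/2)))
        * Real.exp ((bm / (2 * σm^2) - bp / σp^2) * t
            - bm^2 * s / (2 * σm^2) - t^2 / (8 * σm^2 * s)))
    (pR : ℝ → ℝ)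
    (hpR : ∀ r, pR r = (c * r / (Real.sqrt 2 * σm))
      * (2 * r * bp / σp^2 + (r - bm)^2 / (2 * σm^2)) ^ (-(3:ℝ)/2)) :
    ∀ r : ℝ, 0 < r →
      2 * (∫ s in Set.Ioi (0:ℝ), s * p s (2 * r * s)) = pR r := by
  intro r hr
  set a : ℝ := 2 * r * bp / σp^2 + (r - bm)^2 / (2 * σm^2) with hadef
  have ha : 0 < a := by positivity
  have hπ : 0 < Real.sqrt (2 * Real.pi) := Real.sqrt_pos.mpr (by positivity)
  have key : (∫ s in Set.Ioi (0:ℝ), s * p s (2 * r * s))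
      = (c * r / (Real.sqrt (2 * Real.pi) * σm))
        * ∫ s in Set.Ioi (0:ℝ), s ^ ((3:ℝ)/2 - 1) * Real.exp (-(a * s)) := by
    rw [← MeasureTheory.integral_const_mul]
    refine MeasureTheory.setIntegral_congr_fun measurableSet_Ioi (fun s hs => ?_)
    have hs0 : (0:ℝ) < s := hs
    rw [hp]
    have h32 : 0 < s ^ ((3:ℝ)/2) := Real.rpow_pos_of_pos hs0 _
    have h12 : 0 < s ^ ((3:ℝ)/2 - 1) := Real.rpow_pos_of_pos hs0 _
    have hmul : s ^ ((3:ℝ)/2 - 1) * s ^ ((3:ℝ)/2) = s ^ 2 := by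
      rw [← Real.rpow_add hs0, ← Real.rpow_natCast s 2]
      norm_num
    have hexp : (bm / (2 * σm^2) - bp / σp^2) * (2 * r * s)
        - bm^2 * s / (2 * σm^2) - (2 * r * s)^2 / (8 * σm^2 * s) = -(a * s) := by
      rw [hadef]
      field_simp
      ring
    rw [hexp]
    have hpre : s * (c * (2 * r * s) / (2 * Real.sqrt (2 * Real.pi) * σm * s ^ ((3:ℝ)/2)))
        = c * r / (Real.sqrt (2 * Real.pi) * σm) * s ^ ((3:ℝ)/2 - 1) := by
      rw [← mul_div_assoc, div_mul_eq_mul_div,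
        div_eq_div_iff (by positivity) (by positivity)]
      linear_combination (-2 * c * r * Real.sqrt (2 * Real.pi) * σm) * hmul
    calc s * (c * (2 * r * s) / (2 * Real.sqrt (2 * Real.pi) * σm * s ^ ((3:ℝ)/2))
          * Real.exp (-(a * s)))
        = (s * (c * (2 * r * s) / (2 * Real.sqrt (2 * Real.pi) * σm * s ^ ((3:ℝ)/2))))
          * Real.exp (-(a * s)) := by ring
      _ = (c * r / (Real.sqrt (2 * Real.pi) * σm)) * (s ^ ((3:ℝ)/2 - 1) * Real.exp (-(a * s))) := by
          rw [hpre]; ring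
  rw [key, Real.integral_rpow_mul_exp_neg_mul_Ioi (by norm_num : (0:ℝ) < 3/2) ha, hpR r]
  have hΓ : Real.Gamma ((3:ℝ)/2) = Real.sqrt Real.pi / 2 := by
    rw [show (3:ℝ)/2 = 1/2 + 1 by norm_num,
      Real.Gamma_add_one (by norm_num), Real.Gamma_one_half_eq]
    ring
  have hinv : ((1:ℝ) / a) ^ ((3:ℝ)/2) = a ^ (-(3:ℝ)/2) := by
    rw [one_div, Real.inv_rpow ha.le, ← Real.rpow_neg ha.le]
    norm_num
  rw [hΓ, hinv]
  have hsplit : Real.sqrt (2 * Real.pi) = Real.sqrt 2 * Real.sqrt Real.pi :=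
    Real.sqrt_mul (by norm_num) _
  have hπ' : 0 < Real.sqrt Real.pi := Real.sqrt_pos.mpr Real.pi_pos
  have h2 : 0 < Real.sqrt 2 := by positivity
  rw [hsplit]
  generalize a ^ (-(3:ℝ)/2) = A
  field_simp
end

section
/- Let σ₊, σ₋ > 0, b₊ > 0 and b₋ ∈ ℝ, and set c = b₊/σ₊² + max(−b₋, 0)/σ₋². Then ∫₀^∞ (c·r/(√2·σ₋))·(2rb₊/σ₊² + (r − b₋)²/(2σ₋²))^{−3/2} dr = 1; that is, p_R(r) = (c·r/(√2·σ₋))·(2rb₊/σ₊² + (r − b₋)²/(2σ₋²))^{−3/2} is a probability density on (0, ∞). -/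
open MeasureTheory Set Filter Real Topology

lemma pr_aux_sq (β : ℝ) (hβ : β < 0) :
    ∫ r in Set.Ioi (0:ℝ), r * ((r - β)^3)⁻¹ = -1/(2*β) := by
  have hderiv : ∀ r ∈ Set.Ici (0:ℝ),
      HasDerivAt (fun r => -(r - β)⁻¹ - (β/2) * ((r - β)^2)⁻¹) (r * ((r - β)^3)⁻¹) r := by
    intro r hr
    have hpos : 0 < r - β := by simp at hr; linarith
    have hne : r - β ≠ 0 := ne_of_gt hpos
    have h1 : HasDerivAt (fun r : ℝ => r - β) 1 r := (hasDerivAt_id r).sub_const β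
    have h2 := (h1.inv hne).neg
    have h3 := ((h1.pow 2).inv (pow_ne_zero 2 hne)).const_mul (β/2)
    have h := h2.sub h3
    convert h using 1
    · rfl
    · rfl
    · rfl
    simp only [Pi.pow_apply]
    field_simp
    ring
  have htend : Tendsto (fun r : ℝ => -(r - β)⁻¹ - (β/2) * ((r - β)^2)⁻¹) atTop (𝓝 0) := by
    have h0 : Tendsto (fun r : ℝ => r - β) atTop atTop :=
      tendsto_atTop_add_const_right atTop (-β) tendsto_id
    have t1 : Tendsto (fun r : ℝ => (r - β)⁻¹) atTop (𝓝 0) := h0.inv_tendsto_atTop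
    have t2 : Tendsto (fun r : ℝ => ((r - β)^2)⁻¹) atTop (𝓝 0) := by
      have := t1.pow 2
      simpa [← inv_pow] using this
    have := (t1.neg).sub (t2.const_mul (β/2))
    simpa using this
  have key := MeasureTheory.integral_Ioi_of_hasDerivAt_of_nonneg' hderiv
    (fun r hr => by
      have h1 : (0:ℝ) < r := hr
      have h2 : 0 < r - β := by linarith
      positivity) htend
  rw [key]
  have hβ' : β ≠ 0 := ne_of_lt hβ
  rw [show (0:ℝ) - β = -β by ring]
  field_simp
  ring
open MeasureTheory Set Filter Real Topology

lemma pr_aux_zero (β : ℝ) (hβ : β < 0) :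
    ∫ r in Set.Ioi (0:ℝ),
      r * ((r^2 - 2*β*r) * Real.sqrt (r^2 - 2*β*r))⁻¹ = -β⁻¹ := by
  have hβ' : β ≠ 0 := ne_of_lt hβ
  set F : ℝ → ℝ := fun r => -(Real.sqrt r) / (β * Real.sqrt (r - 2*β)) with hF
  have hcont : ContinuousWithinAt F (Set.Ici 0) 0 := by
    apply ContinuousAt.continuousWithinAt
    have hb0 : (0:ℝ) - 2*β > 0 := by linarith
    apply ContinuousAt.div
    · exact (Real.continuous_sqrt.continuousAt).neg
    · exact (continuous_const.mul
        (Real.continuous_sqrt.comp (continuous_id.sub continuous_const))).continuousAt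
    · have : Real.sqrt (0 - 2*β) ≠ 0 := by positivity
      exact mul_ne_zero hβ' this
  have hderiv : ∀ r ∈ Set.Ioi (0:ℝ),
      HasDerivAt F (r * ((r^2 - 2*β*r) * Real.sqrt (r^2 - 2*β*r))⁻¹) r := by
    intro r hr
    have hr' : (0:ℝ) < r := hr
    have h2 : (0:ℝ) < r - 2*β := by linarith
    have ha' : Real.sqrt r ≠ 0 := by positivity
    have hb' : Real.sqrt (r - 2*β) ≠ 0 := by positivity
    have hs1 : HasDerivAt Real.sqrt (1 / (2 * Real.sqrt r)) r :=
      Real.hasDerivAt_sqrt (ne_of_gt hr')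
    have hs2 : HasDerivAt (fun r : ℝ => Real.sqrt (r - 2*β)) (1 / (2 * Real.sqrt (r - 2*β))) r := by
      have h1' : HasDerivAt (fun r : ℝ => r - 2*β) 1 r := (hasDerivAt_id r).sub_const (2*β)
      have := h1'.sqrt (ne_of_gt h2)
      simpa using this
    have h := (hs1.neg).div (hs2.const_mul β) (mul_ne_zero hβ' hb')
    convert h using 1
    · rfl
    · rfl
    · rfl
    simp only [Pi.neg_apply]
    have hsq : Real.sqrt (r^2 - 2*β*r) = Real.sqrt r * Real.sqrt (r - 2*β) := by
      rw [show r^2 - 2*β*r = r*(r - 2*β) by ring, Real.sqrt_mul hr'.le]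
    have ha : Real.sqrt r * Real.sqrt r = r := Real.mul_self_sqrt hr'.le
    have hb : Real.sqrt (r - 2*β) * Real.sqrt (r - 2*β) = r - 2*β := Real.mul_self_sqrt h2.le
    rw [hsq]
    set a := Real.sqrt r with hadef
    set b := Real.sqrt (r - 2*β) with hbdef
    rw [show r^2 - 2*β*r = (a*b)*(a*b) by rw [mul_mul_mul_comm, ha, hb]; ring, ← ha]
    field_simp
    linear_combination hb - ha
  have tratio : Tendsto (fun r : ℝ => Real.sqrt r / Real.sqrt (r - 2*β)) atTop (𝓝 1) := by
    have t0 : Tendsto (fun r : ℝ => 1 - 2*β/r) atTop (𝓝 1) := by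
      have h := (tendsto_inv_atTop_zero (𝕜 := ℝ)).const_mul (2*β)
      have := h.const_sub (1:ℝ)
      simpa [div_eq_mul_inv] using this
    have t1 : Tendsto (fun r : ℝ => (1 - 2*β/r)⁻¹) atTop (𝓝 1) := by
      simpa using t0.inv₀ one_ne_zero
    have t2 : Tendsto (fun r : ℝ => Real.sqrt ((1 - 2*β/r)⁻¹)) atTop (𝓝 1) := by
      have := (Real.continuous_sqrt.continuousAt (x := (1:ℝ))).tendsto.comp t1
      rw [Real.sqrt_one] at this
      exact this
    apply t2.congr'
    filter_upwards [eventually_gt_atTop (0:ℝ)] with r hr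
    have h2 : (0:ℝ) < r - 2*β := by linarith
    rw [show (1 - 2*β/r)⁻¹ = r / (r - 2*β) by field_simp, Real.sqrt_div hr.le]
  have htend : Tendsto F atTop (𝓝 (-β⁻¹)) := by
    have := tratio.const_mul (-β⁻¹)
    rw [mul_one] at this
    apply this.congr
    intro r
    rw [hF]
    simp only [div_eq_mul_inv, mul_inv]
    ring
  have key := MeasureTheory.integral_Ioi_of_hasDerivAt_of_nonneg hcont hderiv
    (fun r hr => by
      have hr' : (0:ℝ) < r := hr
      have h2 : (0:ℝ) < r^2 - 2*β*r := by nlinarith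
      positivity) htend
  rw [key, hF]
  simp
open MeasureTheory Set Filter Real Topology

lemma pr_aux_ne (β b : ℝ) (hb : b ≠ 0) (hD : b^2 - β^2 ≠ 0)
    (hpos : ∀ r : ℝ, 0 < r → 0 < r^2 - 2*β*r + b^2) :
    ∫ r in Set.Ioi (0:ℝ),
      r * ((r^2 - 2*β*r + b^2) * Real.sqrt (r^2 - 2*β*r + b^2))⁻¹
      = (β + |b|) / (b^2 - β^2) := by
  have hb2 : (0:ℝ) < b^2 := by positivity
  have hpos0 : ∀ r : ℝ, 0 ≤ r → 0 < r^2 - 2*β*r + b^2 := by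
    intro r hr
    rcases hr.eq_or_lt with h | h
    · simp [← h]; positivity
    · exact hpos r h
  set F : ℝ → ℝ := fun r => (β*r - b^2) / ((b^2 - β^2) * Real.sqrt (r^2 - 2*β*r + b^2)) with hF
  have hcont : ContinuousWithinAt F (Set.Ici 0) 0 := by
    apply ContinuousAt.continuousWithinAt
    apply ContinuousAt.div
    · fun_prop
    · fun_prop
    · have h0 : (0:ℝ)^2 - 2*β*0 + b^2 = b^2 := by ring
      have : Real.sqrt ((0:ℝ)^2 - 2*β*0 + b^2) ≠ 0 := by rw [h0]; positivity
      exact mul_ne_zero hD this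
  have hderiv : ∀ r ∈ Set.Ioi (0:ℝ),
      HasDerivAt F (r * ((r^2 - 2*β*r + b^2) * Real.sqrt (r^2 - 2*β*r + b^2))⁻¹) r := by
    intro r hr
    have hr' : (0:ℝ) < r := hr
    have hu : 0 < r^2 - 2*β*r + b^2 := hpos r hr'
    have hs' : Real.sqrt (r^2 - 2*β*r + b^2) ≠ 0 := by positivity
    have hN : HasDerivAt (fun r : ℝ => β*r - b^2) β r := by
      simpa using ((hasDerivAt_id r).const_mul β).sub_const (b^2)
    have hu' : HasDerivAt (fun r : ℝ => r^2 - 2*β*r + b^2) (2*r - 2*β) r := by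
      have := ((hasDerivAt_pow 2 r).sub ((hasDerivAt_id r).const_mul (2*β))).add_const (b^2)
      simpa using this
    have hsder : HasDerivAt (fun r : ℝ => Real.sqrt (r^2 - 2*β*r + b^2))
        ((2*r - 2*β) / (2 * Real.sqrt (r^2 - 2*β*r + b^2))) r := by
      have := (Real.hasDerivAt_sqrt (ne_of_gt hu)).comp r hu'
      convert this using 1
      · rfl
      · rfl
      · rfl
      field_simp
    have h := hN.div (hsder.const_mul (b^2 - β^2)) (mul_ne_zero hD hs')
    convert h using 1
    · rfl
    · rfl
    · rfl
    set s := Real.sqrt (r^2 - 2*β*r + b^2) with hsdef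
    have hss : s * s = r^2 - 2*β*r + b^2 := Real.mul_self_sqrt hu.le
    rw [show r^2 - 2*β*r + b^2 = s * s from hss.symm]
    field_simp
    linear_combination (-β) * hss
  have hw : ∀ r : ℝ, 0 < r → (0:ℝ) < 1 - 2*β/r + b^2/r^2 := by
    intro r hr
    have h1 : (1 - 2*β/r + b^2/r^2) = (r^2 - 2*β*r + b^2) / r^2 := by field_simp
    rw [h1]
    exact div_pos (hpos r hr) (by positivity)
  have htend : Tendsto F atTop (𝓝 ((β + 0) / ((b^2 - β^2) * Real.sqrt 1))) := by
    have hinv := tendsto_inv_atTop_zero (𝕜 := ℝ)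
    have hnum : Tendsto (fun r : ℝ => β - b^2/r) atTop (𝓝 (β + 0)) := by
      simpa [div_eq_mul_inv] using (hinv.const_mul (b^2)).const_sub β
    have hin : Tendsto (fun r : ℝ => 1 - 2*β/r + b^2/r^2) atTop (𝓝 (1 - 0 + 0)) := by
      have hA := (hinv.const_mul (2*β)).const_sub (1:ℝ)
      have hB : Tendsto (fun r : ℝ => b^2 * (r^2)⁻¹) atTop (𝓝 (b^2 * 0)) := by
        have := (hinv.pow 2).const_mul (b^2)
        simpa [← inv_pow] using this
      have := hA.add hB
      simpa [div_eq_mul_inv] using this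
    have hsq : Tendsto (fun r : ℝ => Real.sqrt (1 - 2*β/r + b^2/r^2)) atTop
        (𝓝 (Real.sqrt 1)) :=
      (Real.continuous_sqrt.continuousAt (x := (1:ℝ))).tendsto.comp (by simpa using hin)
    have hden : Tendsto (fun r : ℝ => (b^2 - β^2) * Real.sqrt (1 - 2*β/r + b^2/r^2)) atTop
        (𝓝 ((b^2 - β^2) * Real.sqrt 1)) := hsq.const_mul _
    have hdenne : (b^2 - β^2) * Real.sqrt 1 ≠ 0 := by
      rw [Real.sqrt_one, mul_one]; exact hD
    have hG := hnum.div hden hdenne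
    apply hG.congr'
    filter_upwards [eventually_gt_atTop (0:ℝ)] with r hr
    have hwr := hw r hr
    have hru : Real.sqrt (r^2 - 2*β*r + b^2) = r * Real.sqrt (1 - 2*β/r + b^2/r^2) := by
      rw [show r^2 - 2*β*r + b^2 = r^2 * (1 - 2*β/r + b^2/r^2) by field_simp,
        Real.sqrt_mul (sq_nonneg r), Real.sqrt_sq hr.le]
    have hsne : Real.sqrt (1 - 2*β/r + b^2/r^2) ≠ 0 := by positivity
    simp only [hF, Pi.div_apply]
    rw [hru, div_eq_div_iff (mul_ne_zero hD hsne) (mul_ne_zero hD (by positivity))]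
    field_simp
  have key := MeasureTheory.integral_Ioi_of_hasDerivAt_of_nonneg hcont hderiv
    (fun r hr => by
      have hr' : (0:ℝ) < r := hr
      have hu : 0 < r^2 - 2*β*r + b^2 := hpos r hr'
      positivity) htend
  rw [key]
  simp only [hF]
  have h0 : (0:ℝ)^2 - 2*β*0 + b^2 = b^2 := by ring
  rw [h0]
  rw [Real.sqrt_sq_eq_abs, Real.sqrt_one]
  have habs : |b| ≠ 0 := abs_ne_zero.mpr hb
  have hD' : |b|^2 - β^2 ≠ 0 := by rwa [sq_abs]
  rw [show b^2 = |b|^2 from (sq_abs b).symm]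
  field_simp
  ring

lemma pr_rpow_aux (x : ℝ) (hx : 0 < x) : x ^ (-(3:ℝ)/2) = (x * Real.sqrt x)⁻¹ := by
  rw [show (-(3:ℝ)/2) = -(1 + 1/2) by norm_num, Real.rpow_neg hx.le, Real.rpow_add hx,
    Real.rpow_one, ← Real.sqrt_eq_rpow]

/-- The limit law `p_R` of the non-consistent estimator is a probability density
on `(0, ∞)`. -/
theorem ratio_density_integrates_to_one (σp σm bp bm : ℝ) (hσp : 0 < σp) (hσm : 0 < σm)
    (hbp : 0 < bp)
    (c : ℝ) (hc : c = bp / σp^2 + max (-bm) 0 / σm^2) :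
    (∫ r in Set.Ioi (0:ℝ),
        (c * r / (Real.sqrt 2 * σm))
          * (2 * r * bp / σp^2 + (r - bm)^2 / (2 * σm^2)) ^ (-(3:ℝ)/2)) = 1 := by
  have hσp' : σp ≠ 0 := ne_of_gt hσp
  have hσm' : σm ≠ 0 := ne_of_gt hσm
  set β := bm - 2*σm^2*bp/σp^2 with hβdef
  have hk : 0 < 2*σm^2*bp/σp^2 := by positivity
  have hβlt : β < bm := by rw [hβdef]; linarith
  have hcpos : 0 < c := by
    rw [hc]
    have h1 : 0 < bp / σp^2 := by positivity
    have h2 : 0 ≤ max (-bm) 0 / σm^2 := div_nonneg (le_max_right _ _) (sq_nonneg σm)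
    linarith
  have h1 : |bm| - β = 2*σm^2*c := by
    rcases le_or_gt 0 bm with h | h
    · rw [abs_of_nonneg h, hc, hβdef, max_eq_right (by linarith : -bm ≤ 0)]
      field_simp
      ring
    · rw [abs_of_neg h, hc, hβdef, max_eq_left (by linarith : (0:ℝ) ≤ -bm)]
      field_simp
      ring
  have hupos : ∀ r : ℝ, 0 < r → 0 < r^2 - 2*β*r + bm^2 := by
    intro r hr
    have he : r^2 - 2*β*r + bm^2 = (r - bm)^2 + 4*σm^2*bp*r/σp^2 := by
      rw [hβdef]; field_simp; ring
    rw [he]; positivity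
  have hstep : (∫ r in Set.Ioi (0:ℝ),
        (c * r / (Real.sqrt 2 * σm))
          * (2 * r * bp / σp^2 + (r - bm)^2 / (2 * σm^2)) ^ (-(3:ℝ)/2))
      = (2*c*σm^2) * ∫ r in Set.Ioi (0:ℝ),
          r * ((r^2 - 2*β*r + bm^2) * Real.sqrt (r^2 - 2*β*r + bm^2))⁻¹ := by
    rw [← MeasureTheory.integral_const_mul]
    apply MeasureTheory.setIntegral_congr_fun measurableSet_Ioi
    intro r hr
    dsimp only
    have hr' : (0:ℝ) < r := hr
    have hu : 0 < r^2 - 2*β*r + bm^2 := hupos r hr'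
    have hQ : 2*r*bp/σp^2 + (r - bm)^2/(2*σm^2) = (r^2 - 2*β*r + bm^2)/(2*σm^2) := by
      rw [hβdef]; field_simp; ring
    have hQpos : 0 < (r^2 - 2*β*r + bm^2)/(2*σm^2) := by positivity
    rw [hQ, pr_rpow_aux _ hQpos, Real.sqrt_div hu.le,
      show Real.sqrt (2*σm^2) = Real.sqrt 2 * σm by
        rw [Real.sqrt_mul (by norm_num : (0:ℝ) ≤ 2), Real.sqrt_sq hσm.le]]
    have h2 : Real.sqrt 2 * Real.sqrt 2 = 2 := Real.mul_self_sqrt (by norm_num)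
    have h2' : Real.sqrt 2 ≠ 0 := by positivity
    have hsu : Real.sqrt (r^2 - 2*β*r + bm^2) ≠ 0 := by positivity
    have huu : (r^2 - 2*β*r + bm^2) ≠ 0 := ne_of_gt hu
    field_simp
  rw [hstep]
  by_cases hDm : bm^2 - β^2 = 0
  · -- degenerate case: perfect square
    have hbmβ : β = -bm := by
      have hfac : (bm - β) * (bm + β) = 0 := by linear_combination hDm
      rcases mul_eq_zero.mp hfac with h | h
      · exfalso; linarith
      · linarith
    have hbmpos : 0 < bm := by linarith
    have hβneg : β < 0 := by linarith
    rw [show (∫ r in Set.Ioi (0:ℝ),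
          r * ((r^2 - 2*β*r + bm^2) * Real.sqrt (r^2 - 2*β*r + bm^2))⁻¹)
        = ∫ r in Set.Ioi (0:ℝ), r * ((r - β)^3)⁻¹ by
      apply MeasureTheory.setIntegral_congr_fun measurableSet_Ioi
      intro r hr
      dsimp only
      have hr' : (0:ℝ) < r := hr
      have he : r^2 - 2*β*r + bm^2 = (r - β)^2 := by rw [hbmβ]; ring
      rw [he, Real.sqrt_sq (by linarith : (0:ℝ) ≤ r - β),
        show (r-β)^2 * (r-β) = (r-β)^3 by ring]]
    rw [pr_aux_sq β hβneg]
    have habs : |bm| = bm := abs_of_pos hbmpos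
    rw [habs] at h1
    have hβne : β ≠ 0 := ne_of_lt hβneg
    rw [show 2*c*σm^2 = -2*β from by linarith]
    field_simp
  · by_cases hbm : bm = 0
    · have hβneg : β < 0 := by rw [hβdef, hbm]; linarith
      rw [show (∫ r in Set.Ioi (0:ℝ),
            r * ((r^2 - 2*β*r + bm^2) * Real.sqrt (r^2 - 2*β*r + bm^2))⁻¹)
          = ∫ r in Set.Ioi (0:ℝ), r * ((r^2 - 2*β*r) * Real.sqrt (r^2 - 2*β*r))⁻¹ by
        apply MeasureTheory.setIntegral_congr_fun measurableSet_Ioi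
        intro r hr
        dsimp only
        have he : r^2 - 2*β*r + bm^2 = r^2 - 2*β*r := by rw [hbm]; ring
        rw [he]]
      rw [pr_aux_zero β hβneg]
      rw [hbm] at h1
      simp only [abs_zero, zero_sub] at h1
      have hβne : β ≠ 0 := ne_of_lt hβneg
      rw [show 2*c*σm^2 = -β from by linarith]
      field_simp
    · rw [pr_aux_ne β bm hbm hDm hupos]
      have hne2 : |bm| + β ≠ 0 := by
        intro h
        apply hDm
        have : β = -|bm| := by linarith
        rw [this, ← sq_abs bm]; ring
      have hfact : bm^2 - β^2 = (2*σm^2*c) * (|bm| + β) := by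
        rw [← h1, ← sq_abs bm]; ring
      rw [hfact]
      have hcne : (2*σm^2*c) ≠ 0 := by positivity
      rw [show β + |bm| = |bm| + β by ring]
      rw [div_mul_eq_div_div_swap]
      field_simp
end

section
/- Let σ₊, σ₋ > 0. Define q : ℝ × (0, ∞) × (0, 1) → ℝ by q(ρ, λ, τ) = ((λ/2 + ρ)(λ/2)/(2π·σ₋·σ₊³·(1−τ)^{3/2}·τ^{3/2}))·exp(−(λ/2)²/(2σ₋²(1−τ)) − (λ/2 + ρ)²/(2σ₊²τ)) for ρ ≥ 0, and q(ρ, λ, τ) = ((λ/2 − ρ)(λ/2)/(2π·σ₊·σ₋³·(1−τ)^{3/2}·τ^{3/2}))·exp(−(λ/2)²/(2σ₊²τ) − (λ/2 − ρ)²/(2σ₋²(1−τ))) for ρ < 0; extend q by 0 off ℝ × (0, ∞) × (0, 1). Let μ be the measure on ℝ³ with density q with respect to Lebesgue measure, and let the map T : ℝ × (0, ∞) × (0, 1) → ℝ² be T(ρ, λ, τ) = ((ρ₊ − λ/2)/τ, (λ/2 − ρ₋)/(1 − τ)), where ρ₊ = max(ρ, 0), ρ₋ = max(−ρ, 0). Then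 the pushforward of μ under T is the measure on ℝ² with Lebesgue density (a, b) ↦ ∫₀¹ 2δ(1 − δ)·q(aδ + b(1−δ), |aδ + b(1−δ)| − aδ + b(1−δ), δ) dδ. -/
open MeasureTheory
open scoped ENNReal

lemma gauss_bd {σ t w : ℝ} (hσ : 0 < σ) (ht : 0 < t) (hw : 0 ≤ w) :
    w * Real.exp (-(w ^ 2 / (2 * σ ^ 2 * t))) ≤ σ * Real.sqrt t := by
  have hst : 0 < σ * Real.sqrt t := mul_pos hσ (Real.sqrt_pos.2 ht)
  have hs2 : (σ * Real.sqrt t) ^ 2 = σ ^ 2 * t := by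
    rw [mul_pow, Real.sq_sqrt ht.le]
  have hd : 0 < 2 * σ ^ 2 * t := by positivity
  have h1 : w ≤ (σ * Real.sqrt t) * Real.exp (w ^ 2 / (2 * σ ^ 2 * t)) := by
    have h2 := Real.add_one_le_exp (w ^ 2 / (2 * σ ^ 2 * t))
    have h3 : w ≤ (σ * Real.sqrt t) * (w ^ 2 / (2 * σ ^ 2 * t) + 1) := by
      rw [mul_comm, ← sub_nonneg]
      have expand : (w ^ 2 / (2 * σ ^ 2 * t) + 1) * (σ * Real.sqrt t) - w
          = ((w - σ * Real.sqrt t)^2 + (σ * Real.sqrt t)^2) * (σ * Real.sqrt t) / (2 * σ ^ 2 * t) := by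
        field_simp
        nlinarith [hs2]
      rw [expand]
      positivity
    exact h3.trans (mul_le_mul_of_nonneg_left h2 hst.le)
  calc w * Real.exp (-(w ^ 2 / (2 * σ ^ 2 * t)))
      ≤ ((σ * Real.sqrt t) * Real.exp (w ^ 2 / (2 * σ ^ 2 * t)))
          * Real.exp (-(w ^ 2 / (2 * σ ^ 2 * t))) :=
        mul_le_mul_of_nonneg_right h1 (Real.exp_nonneg _)
    _ = σ * Real.sqrt t := by rw [mul_assoc, ← Real.exp_add]; simp

lemma e32 {x : ℝ} (hx : 0 < x) : x ^ ((3:ℝ)/2) = x * Real.sqrt x := by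
  rw [show (3:ℝ)/2 = 1 + 1/2 by norm_num, Real.rpow_add hx, Real.rpow_one, Real.sqrt_eq_rpow]

section Q
variable {σp σm : ℝ} (hσp : 0 < σp) (hσm : 0 < σm) {q : ℝ → ℝ → ℝ → ℝ}
    (hq : ∀ ρ lam τ, q ρ lam τ =
      if 0 < lam ∧ 0 < τ ∧ τ < 1 then
        (if 0 ≤ ρ then
          ((lam/2 + ρ) * (lam/2)
              / (2 * Real.pi * σm * σp^3 * (1-τ) ^ ((3:ℝ)/2) * τ ^ ((3:ℝ)/2)))
            * Real.exp (-(lam/2)^2 / (2*σm^2*(1-τ)) - (lam/2 + ρ)^2 / (2*σp^2*τ))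
        else
          ((lam/2 - ρ) * (lam/2)
              / (2 * Real.pi * σp * σm^3 * (1-τ) ^ ((3:ℝ)/2) * τ ^ ((3:ℝ)/2)))
            * Real.exp (-(lam/2)^2 / (2*σp^2*τ) - (lam/2 - ρ)^2 / (2*σm^2*(1-τ))))
      else 0)

include hq in
lemma q_zero {ρ lam τ : ℝ} (h : ¬ (0 < lam ∧ 0 < τ ∧ τ < 1)) : q ρ lam τ = 0 := by
  rw [hq]; exact if_neg h

include hσp hσm hq in
lemma q_nonneg (ρ lam τ : ℝ) : 0 ≤ q ρ lam τ := by
  rw [hq]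
  split_ifs with h hρ
  · obtain ⟨hl, ht0, ht1⟩ := h
    have h1t : (0:ℝ) ≤ 1 - τ := by linarith
    have r1 := Real.rpow_nonneg h1t ((3:ℝ)/2)
    have r2 := Real.rpow_nonneg ht0.le ((3:ℝ)/2)
    apply mul_nonneg _ (Real.exp_nonneg _)
    apply div_nonneg (mul_nonneg (by linarith) (by linarith))
    have : (0:ℝ) ≤ 2 * Real.pi * σm * σp ^ 3 := by positivity
    positivity
  · obtain ⟨hl, ht0, ht1⟩ := h
    have h1t : (0:ℝ) ≤ 1 - τ := by linarith
    have r1 := Real.rpow_nonneg h1t ((3:ℝ)/2)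
    have r2 := Real.rpow_nonneg ht0.le ((3:ℝ)/2)
    apply mul_nonneg _ (Real.exp_nonneg _)
    apply div_nonneg (mul_nonneg (by push_neg at hρ; linarith) (by linarith))
    have : (0:ℝ) ≤ 2 * Real.pi * σp * σm ^ 3 := by positivity
    positivity
  · exact le_rfl

include hσp hσm hq in
lemma q_bound (ρ lam τ : ℝ) :
    2*τ*(1-τ) * q ρ lam τ ≤ 1/(Real.pi*σp^2) + 1/(Real.pi*σm^2) := by
  have hπ := Real.pi_pos
  have hK : (0:ℝ) < 1/(Real.pi*σp^2) + 1/(Real.pi*σm^2) := by positivity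
  rw [hq]
  split_ifs with h hρ
  · obtain ⟨hl, ht0, ht1⟩ := h
    have h1t : (0:ℝ) < 1 - τ := by linarith
    have hs1 : 0 < Real.sqrt (1-τ) := Real.sqrt_pos.2 h1t
    have hst : 0 < Real.sqrt τ := Real.sqrt_pos.2 ht0
    have esplit : Real.exp (-(lam/2)^2 / (2*σm^2*(1-τ)) - (lam/2 + ρ)^2 / (2*σp^2*τ))
        = Real.exp (-(lam/2)^2 / (2*σm^2*(1-τ))) * Real.exp (-((lam/2 + ρ)^2 / (2*σp^2*τ))) := by
      rw [← Real.exp_add]; congr 1 <;> ring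
    rw [e32 h1t, e32 ht0, esplit]
    have B1 : (lam/2) * Real.exp (-(lam/2)^2 / (2*σm^2*(1-τ))) ≤ σm * Real.sqrt (1-τ) := by
      rw [neg_div]
      exact gauss_bd hσm h1t (by linarith)
    have B2 : (lam/2 + ρ) * Real.exp (-((lam/2+ρ)^2 / (2*σp^2*τ))) ≤ σp * Real.sqrt τ :=
      gauss_bd hσp ht0 (by linarith)
    have key : 2*τ*(1-τ) * ((lam/2 + ρ) * (lam/2)
          / (2*Real.pi*σm*σp^3*((1-τ)*Real.sqrt (1-τ))*(τ*Real.sqrt τ))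
          * (Real.exp (-(lam/2)^2 / (2*σm^2*(1-τ))) * Real.exp (-((lam/2+ρ)^2 / (2*σp^2*τ)))))
        = (1/(Real.pi*σm*σp^3))
            * (((lam/2) * Real.exp (-(lam/2)^2 / (2*σm^2*(1-τ))))/Real.sqrt (1-τ))
            * (((lam/2+ρ) * Real.exp (-((lam/2+ρ)^2 / (2*σp^2*τ))))/Real.sqrt τ) := by
      field_simp
    rw [key]
    have D1 : ((lam/2) * Real.exp (-(lam/2)^2 / (2*σm^2*(1-τ))))/Real.sqrt (1-τ) ≤ σm :=
      (div_le_iff₀ hs1).2 B1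
    have D2 : ((lam/2+ρ) * Real.exp (-((lam/2+ρ)^2 / (2*σp^2*τ))))/Real.sqrt τ ≤ σp :=
      (div_le_iff₀ hst).2 B2
    have final : (1/(Real.pi*σm*σp^3)) * σm * σp = 1/(Real.pi*σp^2) := by
      field_simp
    calc (1/(Real.pi*σm*σp^3))
            * (((lam/2) * Real.exp (-(lam/2)^2 / (2*σm^2*(1-τ))))/Real.sqrt (1-τ))
            * (((lam/2+ρ) * Real.exp (-((lam/2+ρ)^2 / (2*σp^2*τ))))/Real.sqrt τ)
        ≤ (1/(Real.pi*σm*σp^3)) * σm * σp := by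
          have n1 : (0:ℝ) ≤ ((lam/2) * Real.exp (-(lam/2)^2 / (2*σm^2*(1-τ))))/Real.sqrt (1-τ) := by
            apply div_nonneg (mul_nonneg (by linarith) (Real.exp_nonneg _)) hs1.le
          have n2 : (0:ℝ) ≤ ((lam/2+ρ) * Real.exp (-((lam/2+ρ)^2 / (2*σp^2*τ)))) /Real.sqrt τ := by
            apply div_nonneg (mul_nonneg (by linarith) (Real.exp_nonneg _)) hst.le
          have c0 : (0:ℝ) ≤ 1/(Real.pi*σm*σp^3) := by positivity
          gcongr
      _ = 1/(Real.pi*σp^2) := final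
      _ ≤ _ := by
          have : (0:ℝ) < 1/(Real.pi*σm^2) := by positivity
          linarith
  · push_neg at hρ
    obtain ⟨hl, ht0, ht1⟩ := h
    have h1t : (0:ℝ) < 1 - τ := by linarith
    have hs1 : 0 < Real.sqrt (1-τ) := Real.sqrt_pos.2 h1t
    have hst : 0 < Real.sqrt τ := Real.sqrt_pos.2 ht0
    have esplit : Real.exp (-(lam/2)^2 / (2*σp^2*τ) - (lam/2 - ρ)^2 / (2*σm^2*(1-τ)))
        = Real.exp (-(lam/2)^2 / (2*σp^2*τ)) * Real.exp (-((lam/2 - ρ)^2 / (2*σm^2*(1-τ)))) := by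
      rw [← Real.exp_add]; congr 1 <;> ring
    rw [e32 h1t, e32 ht0, esplit]
    have B1 : (lam/2) * Real.exp (-(lam/2)^2 / (2*σp^2*τ)) ≤ σp * Real.sqrt τ := by
      rw [neg_div]
      exact gauss_bd hσp ht0 (by linarith)
    have B2 : (lam/2 - ρ) * Real.exp (-((lam/2-ρ)^2 / (2*σm^2*(1-τ)))) ≤ σm * Real.sqrt (1-τ) :=
      gauss_bd hσm h1t (by linarith)
    have key : 2*τ*(1-τ) * ((lam/2 - ρ) * (lam/2)
          / (2*Real.pi*σp*σm^3*((1-τ)*Real.sqrt (1-τ))*(τ*Real.sqrt τ))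
          * (Real.exp (-(lam/2)^2 / (2*σp^2*τ)) * Real.exp (-((lam/2-ρ)^2 / (2*σm^2*(1-τ))))))
        = (1/(Real.pi*σp*σm^3))
            * (((lam/2) * Real.exp (-(lam/2)^2 / (2*σp^2*τ)))/Real.sqrt τ)
            * (((lam/2-ρ) * Real.exp (-((lam/2-ρ)^2 / (2*σm^2*(1-τ)))))/Real.sqrt (1-τ)) := by
      field_simp
    rw [key]
    have D1 : ((lam/2) * Real.exp (-(lam/2)^2 / (2*σp^2*τ)))/Real.sqrt τ ≤ σp :=
      (div_le_iff₀ hst).2 B1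
    have D2 : ((lam/2-ρ) * Real.exp (-((lam/2-ρ)^2 / (2*σm^2*(1-τ)))))/Real.sqrt (1-τ) ≤ σm :=
      (div_le_iff₀ hs1).2 B2
    have final : (1/(Real.pi*σp*σm^3)) * σp * σm = 1/(Real.pi*σm^2) := by
      field_simp
    calc (1/(Real.pi*σp*σm^3))
            * (((lam/2) * Real.exp (-(lam/2)^2 / (2*σp^2*τ)))/Real.sqrt τ)
            * (((lam/2-ρ) * Real.exp (-((lam/2-ρ)^2 / (2*σm^2*(1-τ)))))/Real.sqrt (1-τ)) ≤
        (1/(Real.pi*σp*σm^3)) * σp * σm := by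
          have n1 : (0:ℝ) ≤ ((lam/2) * Real.exp (-(lam/2)^2 / (2*σp^2*τ)))/Real.sqrt τ := by
            apply div_nonneg (mul_nonneg (by linarith) (Real.exp_nonneg _)) hst.le
          have n2 : (0:ℝ) ≤ ((lam/2-ρ) * Real.exp (-((lam/2-ρ)^2 / (2*σm^2*(1-τ)))))/Real.sqrt (1-τ) := by
            apply div_nonneg (mul_nonneg (by linarith) (Real.exp_nonneg _)) hs1.le
          have c0 : (0:ℝ) ≤ 1/(Real.pi*σp*σm^3) := by positivity
          gcongr
      _ = 1/(Real.pi*σm^2) := final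
      _ ≤ _ := by
          have : (0:ℝ) < 1/(Real.pi*σp^2) := by positivity
          linarith
  · rw [mul_zero]; linarith

include hq in
lemma q_meas : Measurable (fun x : ℝ × ℝ × ℝ => q x.1 x.2.1 x.2.2) := by
  have : (fun x : ℝ × ℝ × ℝ => q x.1 x.2.1 x.2.2) = fun x : ℝ × ℝ × ℝ =>
      if 0 < x.2.1 ∧ 0 < x.2.2 ∧ x.2.2 < 1 then
        (if 0 ≤ x.1 then
          ((x.2.1/2 + x.1) * (x.2.1/2)
              / (2 * Real.pi * σm * σp^3 * (1-x.2.2) ^ ((3:ℝ)/2) * x.2.2 ^ ((3:ℝ)/2)))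
            * Real.exp (-(x.2.1/2)^2 / (2*σm^2*(1-x.2.2)) - (x.2.1/2 + x.1)^2 / (2*σp^2*x.2.2))
        else
          ((x.2.1/2 - x.1) * (x.2.1/2)
              / (2 * Real.pi * σp * σm^3 * (1-x.2.2) ^ ((3:ℝ)/2) * x.2.2 ^ ((3:ℝ)/2)))
            * Real.exp (-(x.2.1/2)^2 / (2*σp^2*x.2.2) - (x.2.1/2 - x.1)^2 / (2*σm^2*(1-x.2.2))))
      else 0 := funext fun x => hq _ _ _
  rw [this]
  apply Measurable.ite
  · exact (measurableSet_lt measurable_const (measurable_fst.comp measurable_snd)).inter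
      ((measurableSet_lt measurable_const (measurable_snd.comp measurable_snd)).inter
        (measurableSet_lt (measurable_snd.comp measurable_snd) measurable_const))
  · apply Measurable.ite
    · exact measurableSet_le measurable_const measurable_fst
    · fun_prop
    · fun_prop
  · exact measurable_const

end Q

noncomputable instance : Measure.IsAddHaarMeasure (volume : Measure (ℝ × ℝ)) :=
  Measure.prod.instIsAddHaarMeasure _ _

-- null sets
lemma null_fst_zero : volume {w : ℝ × ℝ | w.1 = 0} = 0 := by
  have h : {w : ℝ × ℝ | w.1 = 0} = (LinearMap.ker (LinearMap.fst ℝ ℝ ℝ) : Set (ℝ × ℝ)) := by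
    ext w; simp [LinearMap.mem_ker]
  rw [h]
  apply Measure.addHaar_submodule
  intro htop
  have : ((1:ℝ), (0:ℝ)) ∈ LinearMap.ker (LinearMap.fst ℝ ℝ ℝ) := htop ▸ Submodule.mem_top
  simp [LinearMap.mem_ker] at this

lemma null_line {δ : ℝ} (hδ0 : 0 < δ) :
    volume {z : ℝ × ℝ | z.1 * δ + z.2 * (1 - δ) = 0} = 0 := by
  set L : ℝ × ℝ →ₗ[ℝ] ℝ := δ • LinearMap.fst ℝ ℝ ℝ + (1 - δ) • LinearMap.snd ℝ ℝ ℝ with hL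
  have h : {z : ℝ × ℝ | z.1 * δ + z.2 * (1 - δ) = 0} = (LinearMap.ker L : Set (ℝ × ℝ)) := by
    ext z
    simp only [Set.mem_setOf_eq, SetLike.mem_coe, LinearMap.mem_ker, hL, LinearMap.add_apply,
      LinearMap.smul_apply, LinearMap.fst_apply, LinearMap.snd_apply, smul_eq_mul]
    constructor <;> intro hh <;> linarith
  rw [h]
  apply Measure.addHaar_submodule
  intro htop
  have : ((1:ℝ), (0:ℝ)) ∈ LinearMap.ker L := htop ▸ Submodule.mem_top
  simp only [LinearMap.mem_ker, hL, LinearMap.add_apply, LinearMap.smul_apply,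
    LinearMap.fst_apply, LinearMap.snd_apply, smul_eq_mul, mul_one, mul_zero, add_zero] at this
  exact hδ0.ne' this

private lemma qSlice {q : ℝ → ℝ → ℝ → ℝ}
    (hq0 : ∀ ρ lam τ : ℝ, ¬ (0 < lam ∧ 0 < τ ∧ τ < 1) → q ρ lam τ = 0)
    (δ : ℝ) {s : Set (ℝ × ℝ)} (hs : MeasurableSet s) :
    ∫⁻ w : ℝ × ℝ, ((fun w : ℝ × ℝ =>
        ((max w.1 0 - w.2 / 2) / δ, (w.2 / 2 - max (-w.1) 0) / (1 - δ))) ⁻¹' s).indicator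
        (fun w => ENNReal.ofReal (q w.1 w.2 δ)) w
    = ∫⁻ z : ℝ × ℝ, s.indicator (fun ab => ENNReal.ofReal (2 * δ * (1 - δ) *
        q (ab.1 * δ + ab.2 * (1 - δ))
          (|ab.1 * δ + ab.2 * (1 - δ)| - ab.1 * δ + ab.2 * (1 - δ)) δ)) z := by
  by_cases hδ : 0 < δ ∧ δ < 1
  case neg =>
    have hz : ∀ ρ lam : ℝ, q ρ lam δ = 0 := fun ρ lam => hq0 _ _ _ (by tauto)
    simp [hz]
  case pos =>
  obtain ⟨hδ0, hδ1⟩ := hδ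
  have h1δ : (0:ℝ) < 1 - δ := by linarith
  set T : ℝ × ℝ → ℝ × ℝ := fun w =>
    ((max w.1 0 - w.2 / 2) / δ, (w.2 / 2 - max (-w.1) 0) / (1 - δ)) with hTdef
  set g : ℝ × ℝ → ℝ≥0∞ :=
    (T ⁻¹' s).indicator (fun w => ENNReal.ofReal (q w.1 w.2 δ)) with hgdef
  set R : ℝ × ℝ → ℝ≥0∞ := s.indicator (fun ab => ENNReal.ofReal (2 * δ * (1 - δ) *
      q (ab.1 * δ + ab.2 * (1 - δ))
        (|ab.1 * δ + ab.2 * (1 - δ)| - ab.1 * δ + ab.2 * (1 - δ)) δ)) with hRdef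
  set Φp : ℝ × ℝ → ℝ × ℝ := fun z => (z.1 * δ + z.2 * (1 - δ), 2 * (z.2 * (1 - δ))) with hΦp
  set Φm : ℝ × ℝ → ℝ × ℝ := fun z => (z.1 * δ + z.2 * (1 - δ), -(2 * (z.1 * δ))) with hΦm
  set Up : Set (ℝ × ℝ) := {z | 0 < z.1 * δ + z.2 * (1 - δ) ∧ 0 < z.2} with hUpdef
  set Um : Set (ℝ × ℝ) := {z | z.1 * δ + z.2 * (1 - δ) < 0 ∧ z.1 < 0} with hUmdef
  set Sp : Set (ℝ × ℝ) := {w | 0 < w.1 ∧ 0 < w.2} with hSpdef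
  set Sm : Set (ℝ × ℝ) := {w | w.1 < 0 ∧ 0 < w.2} with hSmdef
  have hmul : Measurable fun z : ℝ × ℝ => z.1 * δ + z.2 * (1 - δ) :=
    (measurable_fst.mul_const _).add (measurable_snd.mul_const _)
  have hUp : MeasurableSet Up := by
    have e : Up = {z : ℝ × ℝ | 0 < z.1 * δ + z.2 * (1 - δ)} ∩ {z : ℝ × ℝ | 0 < z.2} := rfl
    rw [e]
    exact (measurableSet_lt measurable_const hmul).inter
      (measurableSet_lt measurable_const measurable_snd)
  have hUm : MeasurableSet Um := by
    have e : Um = {z : ℝ × ℝ | z.1 * δ + z.2 * (1 - δ) < 0} ∩ {z : ℝ × ℝ | z.1 < 0} := rfl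
    rw [e]
    exact (measurableSet_lt hmul measurable_const).inter
      (measurableSet_lt measurable_fst measurable_const)
  have hSp : MeasurableSet Sp := by
    have e : Sp = {w : ℝ × ℝ | 0 < w.1} ∩ {w : ℝ × ℝ | 0 < w.2} := rfl
    rw [e]
    exact (measurableSet_lt measurable_const measurable_fst).inter
      (measurableSet_lt measurable_const measurable_snd)
  have hSm : MeasurableSet Sm := by
    have e : Sm = {w : ℝ × ℝ | w.1 < 0} ∩ {w : ℝ × ℝ | 0 < w.2} := rfl
    rw [e]
    exact (measurableSet_lt measurable_fst measurable_const).inter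
      (measurableSet_lt measurable_const measurable_snd)
  -- Step 1 : reduce LHS to Sp ∪ Sm
  have step1 : ∫⁻ w, g w = (∫⁻ w in Sp, g w) + ∫⁻ w in Sm, g w := by
    have hg0 : ∀ w : ℝ × ℝ, w.1 ≠ 0 → w ∉ Sp ∪ Sm → g w = 0 := by
      intro w hw1 hw
      have hq0 : q w.1 w.2 δ = 0 := by
        rcases lt_or_gt_of_ne hw1 with h | h
        · apply hq0
          rintro ⟨hl, -⟩
          exact hw (Or.inr ⟨h, hl⟩)
        · apply hq0
          rintro ⟨hl, -⟩
          exact hw (Or.inl ⟨h, hl⟩)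
      simp [hgdef, Set.indicator_apply, hq0]
    have hcongr : ∫⁻ w, g w = ∫⁻ w, (Sp ∪ Sm).indicator g w := by
      apply lintegral_congr_ae
      have hN : ∀ᵐ w : ℝ × ℝ, w.1 ≠ 0 := by
        have h : {w : ℝ × ℝ | ¬ w.1 ≠ 0} = {w : ℝ × ℝ | w.1 = 0} := by ext; simp
        rw [ae_iff, h]; exact null_fst_zero
      filter_upwards [hN] with w hw
      by_cases hmem : w ∈ Sp ∪ Sm
      · rw [Set.indicator_of_mem hmem]
      · rw [Set.indicator_of_notMem hmem, hg0 w hw hmem]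
    have hdisj : Disjoint Sp Sm := by
      rw [Set.disjoint_left]
      rintro w ⟨h1, -⟩ ⟨h2, -⟩
      exact absurd h1 (not_lt.2 h2.le)
    rw [hcongr, lintegral_indicator (hSp.union hSm), lintegral_union hSm hdisj]
  -- derivatives
  set Bp : ℝ × ℝ →L[ℝ] ℝ × ℝ := LinearMap.toContinuousLinearMap
    (Matrix.toLin (Module.Basis.finTwoProd ℝ) (Module.Basis.finTwoProd ℝ) !![δ, 1 - δ; 0, 2 * (1 - δ)])
    with hBpdef
  set Bm : ℝ × ℝ →L[ℝ] ℝ × ℝ := LinearMap.toContinuousLinearMap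
    (Matrix.toLin (Module.Basis.finTwoProd ℝ) (Module.Basis.finTwoProd ℝ) !![δ, 1 - δ; -(2 * δ), 0])
    with hBmdef
  have hBp : ∀ z, HasFDerivAt Φp Bp z := by
    intro z
    have hfun : (Bp : ℝ × ℝ → ℝ × ℝ) = Φp := by
      rw [hBpdef, Matrix.toLin_finTwoProd_toContinuousLinearMap]
      funext y
      simp only [ContinuousLinearMap.prod_apply, ContinuousLinearMap.add_apply,
        ContinuousLinearMap.coe_smul', Pi.smul_apply, ContinuousLinearMap.coe_fst',
        ContinuousLinearMap.coe_snd', smul_eq_mul, hΦp]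
      exact Prod.ext (by ring) (by ring)
    rw [← hfun]
    exact Bp.hasFDerivAt
  have hBm : ∀ z, HasFDerivAt Φm Bm z := by
    intro z
    have hfun : (Bm : ℝ × ℝ → ℝ × ℝ) = Φm := by
      rw [hBmdef, Matrix.toLin_finTwoProd_toContinuousLinearMap]
      funext y
      simp only [ContinuousLinearMap.prod_apply, ContinuousLinearMap.add_apply,
        ContinuousLinearMap.coe_smul', Pi.smul_apply, ContinuousLinearMap.coe_fst',
        ContinuousLinearMap.coe_snd', smul_eq_mul, hΦm]
      exact Prod.ext (by ring) (by ring)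
    rw [← hfun]
    exact Bm.hasFDerivAt
  have hdetp : Bp.det = 2 * δ * (1 - δ) := by
    simp only [hBpdef, LinearMap.det_toContinuousLinearMap,
      LinearMap.det_toLin, Matrix.det_fin_two_of]
    ring
  have hdetm : Bm.det = 2 * δ * (1 - δ) := by
    simp only [hBmdef, LinearMap.det_toContinuousLinearMap,
      LinearMap.det_toLin, Matrix.det_fin_two_of]
    ring
  have hdetpos : (0:ℝ) < 2 * δ * (1 - δ) := by positivity
  -- images
  have himgp : Φp '' Up = Sp := by
    ext w
    constructor
    · rintro ⟨z, ⟨h1, h2⟩, rfl⟩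
      exact ⟨h1, by have := mul_pos h2 h1δ; simp only [hΦp]; nlinarith⟩
    · rintro ⟨h1, h2⟩
      refine ⟨((w.1 - w.2 / 2) / δ, w.2 / (2 * (1 - δ))), ⟨?_, ?_⟩, ?_⟩
      · have e : ((w.1 - w.2 / 2) / δ) * δ + (w.2 / (2 * (1 - δ))) * (1 - δ) = w.1 := by
          field_simp
          try ring
        rw [e]; exact h1
      · exact div_pos h2 (by linarith)
      · simp only [hΦp]
        have c1 : (w.1 - w.2 / 2) / δ * δ + w.2 / (2 * (1 - δ)) * (1 - δ) = w.1 := by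
          field_simp
          try ring
        have c2 : 2 * (w.2 / (2 * (1 - δ)) * (1 - δ)) = w.2 := by
          field_simp
          try ring
        exact Prod.ext c1 c2
  have himgm : Φm '' Um = Sm := by
    ext w
    constructor
    · rintro ⟨z, ⟨h1, h2⟩, rfl⟩
      refine ⟨h1, ?_⟩
      have : z.1 * δ < 0 := mul_neg_of_neg_of_pos h2 hδ0
      show 0 < -(2 * (z.1 * δ))
      linarith
    · rintro ⟨h1, h2⟩
      refine ⟨((-w.2 / 2) / δ, (w.1 + w.2 / 2) / (1 - δ)), ⟨?_, ?_⟩, ?_⟩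
      · have e : ((-w.2 / 2) / δ) * δ + ((w.1 + w.2 / 2) / (1 - δ)) * (1 - δ) = w.1 := by
          field_simp
          try ring
        rw [e]; exact h1
      · have : -w.2 / 2 < 0 := by linarith
        exact div_neg_of_neg_of_pos this hδ0
      · simp only [hΦm]
        have c1 : -w.2 / 2 / δ * δ + (w.1 + w.2 / 2) / (1 - δ) * (1 - δ) = w.1 := by
          field_simp
          try ring
        have c2 : -(2 * (-w.2 / 2 / δ * δ)) = w.2 := by
          field_simp
          try ring
        exact Prod.ext c1 c2
  -- injectivity
  have hinjp : Set.InjOn Φp Up := by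
    rintro a _ b _ hab
    simp only [hΦp, Prod.mk.injEq] at hab
    obtain ⟨h1, h2⟩ := hab
    have e2 : a.2 = b.2 := by
      have := mul_left_cancel₀ (two_ne_zero) h2
      exact mul_right_cancel₀ (ne_of_gt h1δ) this
    have e1 : a.1 = b.1 := by
      rw [e2] at h1
      have : a.1 * δ = b.1 * δ := by linarith
      exact mul_right_cancel₀ (ne_of_gt hδ0) this
    exact Prod.ext e1 e2
  have hinjm : Set.InjOn Φm Um := by
    rintro a _ b _ hab
    simp only [hΦm, Prod.mk.injEq] at hab
    obtain ⟨h1, h2⟩ := hab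
    have e1 : a.1 = b.1 := by
      have h2' : 2 * (a.1 * δ) = 2 * (b.1 * δ) := by linarith
      have := mul_left_cancel₀ (two_ne_zero) h2'
      exact mul_right_cancel₀ (ne_of_gt hδ0) this
    have e2 : a.2 = b.2 := by
      rw [e1] at h1
      have : a.2 * (1 - δ) = b.2 * (1 - δ) := by linarith
      exact mul_right_cancel₀ (ne_of_gt h1δ) this
    exact Prod.ext e1 e2
  -- T ∘ Φ = id on domains
  have hTp : ∀ z ∈ Up, T (Φp z) = z := by
    rintro z ⟨h1, h2⟩
    simp only [hTdef, hΦp]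
    have hmax1 : max (z.1 * δ + z.2 * (1 - δ)) 0 = z.1 * δ + z.2 * (1 - δ) := max_eq_left h1.le
    have hmax2 : max (-(z.1 * δ + z.2 * (1 - δ))) 0 = 0 := max_eq_right (by linarith)
    rw [hmax1, hmax2, Prod.mk.injEq]
    constructor
    · rw [div_eq_iff (ne_of_gt hδ0)]; ring
    · rw [div_eq_iff (ne_of_gt h1δ)]; ring
  have hTm : ∀ z ∈ Um, T (Φm z) = z := by
    rintro z ⟨h1, h2⟩
    simp only [hTdef, hΦm]
    have hmax1 : max (z.1 * δ + z.2 * (1 - δ)) 0 = 0 := max_eq_right h1.le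
    have hmax2 : max (-(z.1 * δ + z.2 * (1 - δ))) 0 = -(z.1 * δ + z.2 * (1 - δ)) :=
      max_eq_left (by linarith)
    rw [hmax1, hmax2, Prod.mk.injEq]
    constructor
    · rw [div_eq_iff (ne_of_gt hδ0)]; ring
    · rw [div_eq_iff (ne_of_gt h1δ)]; ring
  -- change of variables, plus part
  have covp : ∫⁻ w in Sp, g w = ∫⁻ z in Up, R z := by
    rw [← himgp,
      lintegral_image_eq_lintegral_abs_det_fderiv_mul volume hUp
        (fun z _ => (hBp z).hasFDerivWithinAt) hinjp g]
    apply setLIntegral_congr_fun hUp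
    intro z hz
    obtain ⟨h1, h2⟩ := hz
    have habs : |z.1 * δ + z.2 * (1 - δ)| = z.1 * δ + z.2 * (1 - δ) := abs_of_pos h1
    have hlam : |z.1 * δ + z.2 * (1 - δ)| - z.1 * δ + z.2 * (1 - δ) = 2 * (z.2 * (1 - δ)) := by
      rw [habs]; ring
    have hmem : Φp z ∈ T ⁻¹' s ↔ z ∈ s := by
      rw [Set.mem_preimage, hTp z ⟨h1, h2⟩]
    rw [hdetp, abs_of_pos hdetpos]
    beta_reduce
    by_cases hzs : z ∈ s
    · rw [hgdef, hRdef, Set.indicator_of_mem (hmem.2 hzs), Set.indicator_of_mem hzs]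
      simp only [hΦp]
      rw [hlam, ← ENNReal.ofReal_mul hdetpos.le]
    · rw [hgdef, hRdef, Set.indicator_of_notMem (fun h => hzs (hmem.1 h)),
        Set.indicator_of_notMem hzs, mul_zero]
  -- change of variables, minus part
  have covm : ∫⁻ w in Sm, g w = ∫⁻ z in Um, R z := by
    rw [← himgm,
      lintegral_image_eq_lintegral_abs_det_fderiv_mul volume hUm
        (fun z _ => (hBm z).hasFDerivWithinAt) hinjm g]
    apply setLIntegral_congr_fun hUm
    intro z hz
    obtain ⟨h1, h2⟩ := hz
    have habs : |z.1 * δ + z.2 * (1 - δ)| = -(z.1 * δ + z.2 * (1 - δ)) := abs_of_neg h1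
    have hlam : |z.1 * δ + z.2 * (1 - δ)| - z.1 * δ + z.2 * (1 - δ) = -(2 * (z.1 * δ)) := by
      rw [habs]; ring
    have hmem : Φm z ∈ T ⁻¹' s ↔ z ∈ s := by
      rw [Set.mem_preimage, hTm z ⟨h1, h2⟩]
    rw [hdetm, abs_of_pos hdetpos]
    beta_reduce
    by_cases hzs : z ∈ s
    · rw [hgdef, hRdef, Set.indicator_of_mem (hmem.2 hzs), Set.indicator_of_mem hzs]
      simp only [hΦm]
      rw [hlam, ← ENNReal.ofReal_mul hdetpos.le]
    · rw [hgdef, hRdef, Set.indicator_of_notMem (fun h => hzs (hmem.1 h)),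
        Set.indicator_of_notMem hzs, mul_zero]
  -- recombine
  have hdisjU : Disjoint Up Um := by
    rw [Set.disjoint_left]
    rintro z ⟨h1, -⟩ ⟨h2, -⟩
    exact absurd h1 (not_lt.2 h2.le)
  have step2 : (∫⁻ z in Up, R z) + ∫⁻ z in Um, R z = ∫⁻ z, R z := by
    refine Eq.trans (lintegral_union hUm hdisjU).symm ?_
    symm
    rw [← lintegral_indicator (hUp.union hUm)]
    apply lintegral_congr_ae
    have hN : ∀ᵐ z : ℝ × ℝ, z.1 * δ + z.2 * (1 - δ) ≠ 0 := by
      have h : {z : ℝ × ℝ | ¬ z.1 * δ + z.2 * (1 - δ) ≠ 0}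
          = {z : ℝ × ℝ | z.1 * δ + z.2 * (1 - δ) = 0} := by ext; simp
      rw [ae_iff, h]; exact null_line hδ0
    filter_upwards [hN] with z hz
    by_cases hmem : z ∈ Up ∪ Um
    · rw [Set.indicator_of_mem hmem]
    · rw [Set.indicator_of_notMem hmem]
      have hR0 : R z = 0 := by
        have hq0 : q (z.1 * δ + z.2 * (1 - δ))
            (|z.1 * δ + z.2 * (1 - δ)| - z.1 * δ + z.2 * (1 - δ)) δ = 0 := by
          apply hq0
          rintro ⟨hl, -⟩
          rcases lt_or_gt_of_ne hz with h | h
          · -- ρ < 0 ; z ∉ Um means 0 ≤ z.1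
            have hz1 : 0 ≤ z.1 := by
              by_contra hc
              exact hmem (Or.inr ⟨h, not_le.1 hc⟩)
            have : |z.1 * δ + z.2 * (1 - δ)| - z.1 * δ + z.2 * (1 - δ) = -(2 * (z.1 * δ)) := by
              rw [abs_of_neg h]; ring
            rw [this] at hl
            nlinarith
          · -- ρ > 0 ; z ∉ Up means z.2 ≤ 0
            have hz2 : z.2 ≤ 0 := by
              by_contra hc
              exact hmem (Or.inl ⟨h, not_le.1 hc⟩)
            have : |z.1 * δ + z.2 * (1 - δ)| - z.1 * δ + z.2 * (1 - δ) = 2 * (z.2 * (1 - δ)) := by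
              rw [abs_of_pos h]; ring
            rw [this] at hl
            nlinarith
        simp [hRdef, Set.indicator_apply, hq0]
      rw [hR0]
  rw [step1, covp, covm, step2]

/-- The pushforward of the joint law of `(ξ₁, L₁(ξ), Q⁺₁)` (with density `q`) under the
map `(ρ, λ, τ) ↦ ((ρ₊ − λ/2)/τ, (λ/2 − ρ₋)/(1 − τ))` has Lebesgue density
`(a, b) ↦ ∫₀¹ 2δ(1−δ) q(aδ + b(1−δ), |aδ + b(1−δ)| − aδ + b(1−δ), δ) dδ`. -/
theorem estimator_joint_density_pushforward (σp σm : ℝ) (hσp : 0 < σp) (hσm : 0 < σm)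
    (q : ℝ → ℝ → ℝ → ℝ)
    (hq : ∀ ρ lam τ, q ρ lam τ =
      if 0 < lam ∧ 0 < τ ∧ τ < 1 then
        (if 0 ≤ ρ then
          ((lam/2 + ρ) * (lam/2)
              / (2 * Real.pi * σm * σp^3 * (1-τ) ^ ((3:ℝ)/2) * τ ^ ((3:ℝ)/2)))
            * Real.exp (-(lam/2)^2 / (2*σm^2*(1-τ)) - (lam/2 + ρ)^2 / (2*σp^2*τ))
        else
          ((lam/2 - ρ) * (lam/2)
              / (2 * Real.pi * σp * σm^3 * (1-τ) ^ ((3:ℝ)/2) * τ ^ ((3:ℝ)/2)))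
            * Real.exp (-(lam/2)^2 / (2*σp^2*τ) - (lam/2 - ρ)^2 / (2*σm^2*(1-τ))))
      else 0) :
    Measure.map
      (fun x : ℝ × ℝ × ℝ =>
        ((max x.1 0 - x.2.1 / 2) / x.2.2, (x.2.1 / 2 - max (-x.1) 0) / (1 - x.2.2)))
      (volume.withDensity (fun x : ℝ × ℝ × ℝ => ENNReal.ofReal (q x.1 x.2.1 x.2.2)))
    = volume.withDensity (fun ab : ℝ × ℝ => ENNReal.ofReal
        (∫ δ in Set.Ioo (0:ℝ) 1, 2 * δ * (1 - δ) *
          q (ab.1 * δ + ab.2 * (1 - δ))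
            (|ab.1 * δ + ab.2 * (1 - δ)| - ab.1 * δ + ab.2 * (1 - δ)) δ)) := by
  have hq0 : ∀ ρ lam τ : ℝ, ¬ (0 < lam ∧ 0 < τ ∧ τ < 1) → q ρ lam τ = 0 :=
    fun _ _ _ h => q_zero hq h
  have hqnn : ∀ ρ lam τ : ℝ, 0 ≤ q ρ lam τ := q_nonneg hσp hσm hq
  have hqb : ∀ ρ lam τ : ℝ, 2*τ*(1-τ) * q ρ lam τ ≤ 1/(Real.pi*σp^2) + 1/(Real.pi*σm^2) :=
    q_bound hσp hσm hq
  have hqm : Measurable (fun x : ℝ × ℝ × ℝ => q x.1 x.2.1 x.2.2) := q_meas hq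
  set T3 : ℝ × ℝ × ℝ → ℝ × ℝ := fun x =>
    ((max x.1 0 - x.2.1 / 2) / x.2.2, (x.2.1 / 2 - max (-x.1) 0) / (1 - x.2.2)) with hT3def
  have hT3 : Measurable T3 := by fun_prop
  set qE : ℝ × ℝ × ℝ → ℝ≥0∞ := fun x => ENNReal.ofReal (q x.1 x.2.1 x.2.2) with hqE
  have hqEm : Measurable qE := hqm.ennreal_ofReal
  refine Measure.ext fun s hs => ?_
  rw [Measure.map_apply hT3 hs, withDensity_apply _ (hT3 hs), withDensity_apply _ hs]
  set F : ℝ × ℝ × ℝ → ℝ≥0∞ := (T3 ⁻¹' s).indicator qE with hF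
  have hFm : Measurable F := hqEm.indicator (hT3 hs)
  have L1 : ∫⁻ x in T3 ⁻¹' s, qE x = ∫⁻ x, F x := (lintegral_indicator (hT3 hs) qE).symm
  have L2 : ∫⁻ x, F x = ∫⁻ p : (ℝ × ℝ) × ℝ, F (MeasurableEquiv.prodAssoc p) :=
    MeasurePreserving.lintegral_map_equiv F MeasurableEquiv.prodAssoc
      volume_preserving_prodAssoc
  have L3 : ∫⁻ p : (ℝ × ℝ) × ℝ, F (MeasurableEquiv.prodAssoc p)
      = ∫⁻ t : ℝ, ∫⁻ w : ℝ × ℝ, F (w.1, w.2, t) := by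
    rw [Measure.volume_eq_prod]
    exact lintegral_prod_symm _ (hFm.comp MeasurableEquiv.prodAssoc.measurable).aemeasurable
  have L4 : ∀ t : ℝ, (∫⁻ w : ℝ × ℝ, F (w.1, w.2, t))
      = ∫⁻ z : ℝ × ℝ, s.indicator (fun ab => ENNReal.ofReal (2 * t * (1 - t) *
          q (ab.1 * t + ab.2 * (1 - t))
            (|ab.1 * t + ab.2 * (1 - t)| - ab.1 * t + ab.2 * (1 - t)) t)) z := by
    intro t
    have he : (fun w : ℝ × ℝ => F (w.1, w.2, t)) = fun w : ℝ × ℝ =>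
        ((fun w : ℝ × ℝ =>
          ((max w.1 0 - w.2 / 2) / t, (w.2 / 2 - max (-w.1) 0) / (1 - t))) ⁻¹' s).indicator
          (fun w => ENNReal.ofReal (q w.1 w.2 t)) w := rfl
    rw [he]
    exact qSlice hq0 t hs
  -- swap order of integration
  set H : ℝ → ℝ × ℝ → ℝ≥0∞ := fun t z => s.indicator (fun ab => ENNReal.ofReal (2 * t * (1 - t) *
      q (ab.1 * t + ab.2 * (1 - t))
        (|ab.1 * t + ab.2 * (1 - t)| - ab.1 * t + ab.2 * (1 - t)) t)) z with hHdef
  have hHm : Measurable (Function.uncurry H) := by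
    have he : Function.uncurry H = Set.indicator {p : ℝ × (ℝ × ℝ) | p.2 ∈ s}
        (fun p : ℝ × (ℝ × ℝ) => ENNReal.ofReal (2 * p.1 * (1 - p.1) *
          q (p.2.1 * p.1 + p.2.2 * (1 - p.1))
            (|p.2.1 * p.1 + p.2.2 * (1 - p.1)| - p.2.1 * p.1 + p.2.2 * (1 - p.1)) p.1)) := by
      funext p
      by_cases hp : p.2 ∈ s
      · simp only [Function.uncurry, hHdef, Set.indicator_of_mem hp,
          Set.indicator_of_mem (show p ∈ {p : ℝ × (ℝ × ℝ) | p.2 ∈ s} from hp)]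
      · simp only [Function.uncurry, hHdef, Set.indicator_of_notMem hp,
          Set.indicator_of_notMem (show p ∉ {p : ℝ × (ℝ × ℝ) | p.2 ∈ s} from hp)]
    rw [he]
    apply Measurable.indicator _ (measurable_snd hs)
    apply Measurable.ennreal_ofReal
    apply Measurable.mul
    · fun_prop
    · apply hqm.comp (f := fun p : ℝ × (ℝ × ℝ) =>
        ((p.2.1 * p.1 + p.2.2 * (1 - p.1)),
          (|p.2.1 * p.1 + p.2.2 * (1 - p.1)| - p.2.1 * p.1 + p.2.2 * (1 - p.1), p.1)))
      fun_prop
  have L5 : ∫⁻ t : ℝ, ∫⁻ z : ℝ × ℝ, H t z = ∫⁻ z : ℝ × ℝ, ∫⁻ t : ℝ, H t z :=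
    lintegral_lintegral_swap hHm.aemeasurable
  have L6 : ∀ z : ℝ × ℝ, (∫⁻ t : ℝ, H t z) = s.indicator (fun ab => ∫⁻ t : ℝ,
      ENNReal.ofReal (2 * t * (1 - t) * q (ab.1 * t + ab.2 * (1 - t))
        (|ab.1 * t + ab.2 * (1 - t)| - ab.1 * t + ab.2 * (1 - t)) t)) z := by
    intro z
    by_cases hz : z ∈ s
    · simp only [hHdef, Set.indicator_of_mem hz]
    · simp only [hHdef, Set.indicator_of_notMem hz, lintegral_zero]
  have L7 : ∀ ab : ℝ × ℝ, (∫⁻ t : ℝ, ENNReal.ofReal (2 * t * (1 - t) *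
      q (ab.1 * t + ab.2 * (1 - t))
        (|ab.1 * t + ab.2 * (1 - t)| - ab.1 * t + ab.2 * (1 - t)) t))
      = ENNReal.ofReal (∫ δ in Set.Ioo (0:ℝ) 1, 2 * δ * (1 - δ) *
          q (ab.1 * δ + ab.2 * (1 - δ))
            (|ab.1 * δ + ab.2 * (1 - δ)| - ab.1 * δ + ab.2 * (1 - δ)) δ) := by
    intro ab
    set f : ℝ → ℝ := fun t => 2 * t * (1 - t) * q (ab.1 * t + ab.2 * (1 - t))
        (|ab.1 * t + ab.2 * (1 - t)| - ab.1 * t + ab.2 * (1 - t)) t with hfdef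
    have hzero : ∀ t : ℝ, t ∉ Set.Ioo (0:ℝ) 1 → f t = 0 := by
      intro t ht
      have : q (ab.1 * t + ab.2 * (1 - t))
          (|ab.1 * t + ab.2 * (1 - t)| - ab.1 * t + ab.2 * (1 - t)) t = 0 := by
        apply hq0
        rintro ⟨-, h1, h2⟩
        exact ht ⟨h1, h2⟩
      rw [hfdef]
      simp [this]
    have hfm : Measurable f := by
      rw [hfdef]
      apply Measurable.mul
      · fun_prop
      · apply hqm.comp (f := fun t : ℝ =>
          ((ab.1 * t + ab.2 * (1 - t)),
            (|ab.1 * t + ab.2 * (1 - t)| - ab.1 * t + ab.2 * (1 - t), t)))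
        fun_prop
    haveI : IsFiniteMeasure (volume.restrict (Set.Ioo (0:ℝ) 1)) := by
      constructor
      rw [Measure.restrict_apply_univ]
      simp [Real.volume_Ioo]
    have hnn : ∀ t ∈ Set.Ioo (0:ℝ) 1, 0 ≤ f t := by
      rintro t ⟨h1, h2⟩
      rw [hfdef]
      exact mul_nonneg (by nlinarith) (hqnn _ _ _)
    have hint : Integrable f (volume.restrict (Set.Ioo (0:ℝ) 1)) := by
      constructor
      · exact hfm.aestronglyMeasurable
      · apply HasFiniteIntegral.of_bounded
          (C := 1/(Real.pi*σp^2) + 1/(Real.pi*σm^2))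
        rw [ae_restrict_iff' measurableSet_Ioo]
        apply ae_of_all
        intro t ht
        rw [Real.norm_eq_abs, abs_of_nonneg (hnn t ht)]
        exact hqb _ _ _
    calc ∫⁻ t : ℝ, ENNReal.ofReal (f t)
        = ∫⁻ t : ℝ, (Set.Ioo (0:ℝ) 1).indicator (fun t => ENNReal.ofReal (f t)) t := by
          apply lintegral_congr
          intro t
          by_cases ht : t ∈ Set.Ioo (0:ℝ) 1
          · rw [Set.indicator_of_mem ht]
          · rw [Set.indicator_of_notMem ht, hzero t ht]
            simp
      _ = ∫⁻ t in Set.Ioo (0:ℝ) 1, ENNReal.ofReal (f t) :=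
          lintegral_indicator measurableSet_Ioo _
      _ = ENNReal.ofReal (∫ t in Set.Ioo (0:ℝ) 1, f t) :=
          (ofReal_integral_eq_lintegral_ofReal hint
            ((ae_restrict_iff' measurableSet_Ioo).2 (ae_of_all _ hnn))).symm
  calc ∫⁻ x in T3 ⁻¹' s, qE x
      = ∫⁻ t : ℝ, ∫⁻ z : ℝ × ℝ, H t z := by
        rw [L1, L2, L3]
        exact lintegral_congr fun t => L4 t
    _ = ∫⁻ z : ℝ × ℝ, ∫⁻ t : ℝ, H t z := L5
    _ = ∫⁻ z : ℝ × ℝ, s.indicator (fun ab => ENNReal.ofReal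
          (∫ δ in Set.Ioo (0:ℝ) 1, 2 * δ * (1 - δ) *
            q (ab.1 * δ + ab.2 * (1 - δ))
              (|ab.1 * δ + ab.2 * (1 - δ)| - ab.1 * δ + ab.2 * (1 - δ)) δ)) z := by
        apply lintegral_congr
        intro z
        rw [L6 z]
        by_cases hz : z ∈ s
        · rw [Set.indicator_of_mem hz, Set.indicator_of_mem hz, L7 z]
        · rw [Set.indicator_of_notMem hz, Set.indicator_of_notMem hz]
    _ = ∫⁻ ab in s, ENNReal.ofReal
          (∫ δ in Set.Ioo (0:ℝ) 1, 2 * δ * (1 - δ) *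
            q (ab.1 * δ + ab.2 * (1 - δ))
              (|ab.1 * δ + ab.2 * (1 - δ)| - ab.1 * δ + ab.2 * (1 - δ)) δ) :=
          lintegral_indicator hs _
end
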